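/- arXiv:2006.13361 — 4 statements merged into one kernel-verified Lean document; each statement's English description precedes it below -/
import Mathlib

section
/- Let (Ω, K, P) be a probability space and A, B two sub-σ-algebras of K. Define ψ'(A,B) = inf { P(A∩B)/(P(A)P(B)) : A ∈ A, B ∈ B, P(A)P(B) > 0 } and ρ(A,B) = sup { |corr(X,Y)| : X ∈ L²(A), Y ∈ L²(B) }. Then ρ(A,B) ≤ 1 - ψ'(A,B). -/
open MeasureTheory Filter Topology ProbabilityTheory
open scoped ENNReal InnerProductSpace

/-!
If `c = ψ'(𝒜, ℬ)` then `P(A ∩ B) ≥ c P(A) P(B)` for all `A ∈ 𝒜`, `B ∈ ℬ`. For an `𝒜`-measurable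
`u` and a `ℬ`-measurable `v` taking finitely many values `aᵢ` on `Aᵢ` and `bⱼ` on `Bⱼ`, this gives
`E (u + v)² = ∑ (aᵢ + bⱼ)² P(Aᵢ ∩ Bⱼ) ≥ c ∑ (aᵢ + bⱼ)² P(Aᵢ) P(Bⱼ) = c (E u² + E v² + 2 E u E v)`,
the right-hand side being the same second moment computed under `P ⊗ P`. Both sides are continuous
in `L²`, so the inequality holds for all square-integrable `u`, `v`. When `E u = 0`, applying it
to `u` and `t v` for every real `t` yields a nonnegative quadratic polynomial in `t`, whose
discriminant condition is `|E (u v)| ≤ (1 - c) ‖u‖₂ ‖v‖₂`.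
-/

section

variable {α β : Type*} [MeasurableSpace α]

theorem integral_comp_eq_sum_measureReal_preimage (μ : Measure α) [IsFiniteMeasure μ]
    {f : α → β} {S : Finset β} (hfS : ∀ x, f x ∈ S) (hf : ∀ b, MeasurableSet (f ⁻¹' {b}))
    (φ : β → ℝ) :
    ∫ x, φ (f x) ∂μ = ∑ b ∈ S, μ.real (f ⁻¹' {b}) * φ b := by
  classical
  have hφf : (fun x => φ (f x)) = fun x => ∑ b ∈ S, (f ⁻¹' {b}).indicator (fun _ => φ b) x := by
    ext x
    simp [Set.indicator_apply, hfS]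
  rw [hφf, integral_finsetSum _ fun b _ => (integrable_const _).indicator (hf b)]
  exact Finset.sum_congr rfl fun b _ => by rw [integral_indicator_const _ (hf b), smul_eq_mul]

theorem integral_prod_add_sq [MeasurableSpace β] {μ : Measure α} {ν : Measure β}
    [IsProbabilityMeasure μ] [IsProbabilityMeasure ν] {f : α → ℝ} {g : β → ℝ}
    (hf : MemLp f 2 μ) (hg : MemLp g 2 ν) :
    ∫ z, (f z.1 + g z.2) ^ 2 ∂μ.prod ν
      = ∫ x, f x ^ 2 ∂μ + ∫ y, g y ^ 2 ∂ν + 2 * (∫ x, f x ∂μ) * ∫ y, g y ∂ν := by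
  have hf2 : Integrable (fun z : α × β => f z.1 ^ 2) (μ.prod ν) := hf.integrable_sq.comp_fst ν
  have hg2 : Integrable (fun z : α × β => g z.2 ^ 2) (μ.prod ν) := hg.integrable_sq.comp_snd μ
  have hsum : Integrable (fun z : α × β => f z.1 ^ 2 + g z.2 ^ 2) (μ.prod ν) := hf2.add hg2
  have hfg : Integrable (fun z : α × β => 2 * (f z.1 * g z.2)) (μ.prod ν) :=
    ((hf.integrable one_le_two).mul_prod (hg.integrable one_le_two)).const_mul 2
  simp_rw [add_sq', mul_assoc]
  rw [integral_add hsum hfg, integral_add hf2 hg2, integral_const_mul, integral_prod_mul,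
    integral_fun_fst (fun x => f x ^ 2), integral_fun_snd (fun y => g y ^ 2)]
  simp

end

section

variable {α E : Type*} [NormedAddCommGroup E] [MeasurableSpace E] [BorelSpace E]
  [SecondCountableTopology E]

theorem exists_finite_range_tendsto_eLpNorm_sub {m₀ : MeasurableSpace α} {μ : Measure α}
    {m : MeasurableSpace α} (hm : m ≤ m₀) {p : ℝ≥0∞} (hp : p ≠ ∞) {f : α → E}
    (hf : Measurable[m] f) (hfp : MemLp f p μ) :
    ∃ s : ℕ → α → E, (∀ n, Measurable[m] (s n) ∧ (Set.range (s n)).Finite ∧ MemLp (s n) p μ) ∧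
      Tendsto (fun n => eLpNorm (s n - f) p μ) atTop (𝓝 0) := by
  have hfm : StronglyMeasurable[m] f := hf.stronglyMeasurable
  have hfp' : MemLp f p (μ.trim hm) := by
    refine ⟨hfm.aestronglyMeasurable, ?_⟩
    rw [eLpNorm_trim hm hfm]
    exact hfp.2
  let s n := SimpleFunc.approxOn f hf (Set.range f ∪ {0}) 0 (by simp) n
  refine ⟨fun n => s n, fun n => ⟨(s n).measurable, (s n).finite_range,
      memLp_of_memLp_trim hm (SimpleFunc.memLp_approxOn_range hf hfp' n)⟩, ?_⟩
  exact (SimpleFunc.tendsto_approxOn_range_Lp_eLpNorm hp hf hfp'.2).congr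
    fun n => eLpNorm_trim hm ((s n).stronglyMeasurable.sub hfm)

end

namespace MeasureTheory.MemLp

variable {α : Type*} [MeasurableSpace α] {μ : Measure α} {f g : α → ℝ}

theorem inner_toLp (hf : MemLp f 2 μ) (hg : MemLp g 2 μ) :
    ⟪hf.toLp f, hg.toLp g⟫_ℝ = ∫ x, f x * g x ∂μ := by
  rw [L2.inner_def]
  refine integral_congr_ae ?_
  filter_upwards [hf.coeFn_toLp, hg.coeFn_toLp] with x hfx hgx
  simp [hfx, hgx, mul_comm]

theorem norm_toLp_sq (hf : MemLp f 2 μ) : ‖hf.toLp f‖ ^ 2 = ∫ x, f x ^ 2 ∂μ := by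
  simp_rw [← real_inner_self_eq_norm_sq, inner_toLp hf hf, sq]

theorem inner_one_toLp [IsFiniteMeasure μ] (hf : MemLp f 2 μ) :
    ⟪indicatorConstLp 2 MeasurableSet.univ (measure_ne_top μ _) (1 : ℝ), hf.toLp f⟫_ℝ
      = ∫ x, f x ∂μ := by
  rw [L2.inner_indicatorConstLp_one, setIntegral_univ]
  exact integral_congr_ae hf.coeFn_toLp

end MeasureTheory.MemLp

theorem abs_real_inner_le_of_forall_norm_add_smul {F : Type*} [NormedAddCommGroup F]
    [InnerProductSpace ℝ F] {x y : F} {c : ℝ} (hc : c ≤ 1)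
    (h : ∀ t : ℝ, c * (‖x‖ ^ 2 + ‖t • y‖ ^ 2) ≤ ‖x + t • y‖ ^ 2) :
    |⟪x, y⟫_ℝ| ≤ (1 - c) * (‖x‖ * ‖y‖) := by
  have hquad : ∀ t : ℝ,
      0 ≤ ((1 - c) * ‖y‖ ^ 2) * (t * t) + (2 * ⟪x, y⟫_ℝ) * t + (1 - c) * ‖x‖ ^ 2 := by
    intro t
    have ht := h t
    rw [norm_add_sq_real, norm_smul, inner_smul_right, mul_pow, Real.norm_eq_abs, sq_abs] at ht
    linarith
  have hdisc := discrim_le_zero hquad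
  rw [discrim] at hdisc
  refine abs_le_of_sq_le_sq ?_ (mul_nonneg (sub_nonneg.2 hc) (by positivity))
  nlinarith

section Mixing

variable {Ω : Type*} {𝒜 ℬ : MeasurableSpace Ω} {m : MeasurableSpace Ω} {P : Measure Ω}
  [IsProbabilityMeasure P] {c : ℝ}

theorem mul_integral_prod_le_integral_add_sq (h𝒜 : 𝒜 ≤ m) (hℬ : ℬ ≤ m)
    (hmix : ∀ A B, MeasurableSet[𝒜] A → MeasurableSet[ℬ] B →
      c * (P.real A * P.real B) ≤ P.real (A ∩ B))
    {s t : Ω → ℝ} (hs : Measurable[𝒜] s) (ht : Measurable[ℬ] t) (hs' : (Set.range s).Finite)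
    (ht' : (Set.range t).Finite) :
    c * ∫ z, (s z.1 + t z.2) ^ 2 ∂P.prod P ≤ ∫ ω, (s ω + t ω) ^ 2 ∂P := by
  have hfib : ∀ p : ℝ × ℝ, MeasurableSet[𝒜] (s ⁻¹' {p.1}) ∧ MeasurableSet[ℬ] (t ⁻¹' {p.2}) :=
    fun p => ⟨hs (measurableSet_singleton p.1), ht (measurableSet_singleton p.2)⟩
  have hfiber_diag : ∀ p : ℝ × ℝ, (fun ω => (s ω, t ω)) ⁻¹' {p} = s ⁻¹' {p.1} ∩ t ⁻¹' {p.2} := by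
    intro p; ext ω; simp [Prod.ext_iff]
  have hfiber_prod : ∀ p : ℝ × ℝ, Prod.map s t ⁻¹' {p} = (s ⁻¹' {p.1}) ×ˢ (t ⁻¹' {p.2}) := by
    intro p; ext z; simp [Prod.ext_iff]
  set S := hs'.toFinset ×ˢ ht'.toFinset
  have hrange : ∀ ω ω', (s ω, t ω') ∈ S := fun ω ω' => by simp [S]
  have hsum_prod : ∫ z, (s z.1 + t z.2) ^ 2 ∂P.prod P
      = ∑ p ∈ S, (P.prod P).real (Prod.map s t ⁻¹' {p}) * (p.1 + p.2) ^ 2 :=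
    integral_comp_eq_sum_measureReal_preimage (P.prod P) (fun z => hrange z.1 z.2)
      (fun p => hfiber_prod p ▸ (h𝒜 _ (hfib p).1).prod (hℬ _ (hfib p).2))
      (fun p => (p.1 + p.2) ^ 2)
  have hsum_diag : ∫ ω, (s ω + t ω) ^ 2 ∂P
      = ∑ p ∈ S, P.real ((fun ω => (s ω, t ω)) ⁻¹' {p}) * (p.1 + p.2) ^ 2 :=
    integral_comp_eq_sum_measureReal_preimage P (fun ω => hrange ω ω)
      (fun p => hfiber_diag p ▸ (h𝒜 _ (hfib p).1).inter (hℬ _ (hfib p).2))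
      (fun p => (p.1 + p.2) ^ 2)
  rw [hsum_prod, hsum_diag, Finset.mul_sum]
  refine Finset.sum_le_sum fun p _ => ?_
  rw [hfiber_prod, hfiber_diag, measureReal_prod_prod, ← mul_assoc]
  exact mul_le_mul_of_nonneg_right (hmix _ _ (hfib p).1 (hfib p).2) (sq_nonneg _)

theorem mul_norm_toLp_sq_le_of_mixing (h𝒜 : 𝒜 ≤ m) (hℬ : ℬ ≤ m)
    (hmix : ∀ A B, MeasurableSet[𝒜] A → MeasurableSet[ℬ] B →
      c * (P.real A * P.real B) ≤ P.real (A ∩ B))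
    {u v : Ω → ℝ} (hu : Measurable[𝒜] u) (hv : Measurable[ℬ] v) (hu2 : MemLp u 2 P)
    (hv2 : MemLp v 2 P) :
    c * (‖hu2.toLp u‖ ^ 2 + ‖hv2.toLp v‖ ^ 2 + 2 * (∫ ω, u ω ∂P) * ∫ ω, v ω ∂P)
      ≤ ‖hu2.toLp u + hv2.toLp v‖ ^ 2 := by
  obtain ⟨s, hs, hsu⟩ := exists_finite_range_tendsto_eLpNorm_sub h𝒜 ENNReal.ofNat_ne_top hu hu2
  obtain ⟨t, ht, htv⟩ := exists_finite_range_tendsto_eLpNorm_sub hℬ ENNReal.ofNat_ne_top hv hv2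
  have hS := (Lp.tendsto_Lp_iff_tendsto_eLpNorm'' _ (fun n => (hs n).2.2) _ hu2).2 hsu
  have hT := (Lp.tendsto_Lp_iff_tendsto_eLpNorm'' _ (fun n => (ht n).2.2) _ hv2).2 htv
  rw [← hu2.inner_one_toLp, ← hv2.inner_one_toLp]
  refine le_of_tendsto_of_tendsto'
    (tendsto_const_nhds.mul (((hS.norm.pow 2).add (hT.norm.pow 2)).add
      ((tendsto_const_nhds.mul (tendsto_const_nhds.inner hS)).mul (tendsto_const_nhds.inner hT))))
    ((hS.add hT).norm.pow 2) fun n => ?_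
  rw [(hs n).2.2.inner_one_toLp, (ht n).2.2.inner_one_toLp, ← MemLp.toLp_add,
    MemLp.norm_toLp_sq, MemLp.norm_toLp_sq, MemLp.norm_toLp_sq,
    ← integral_prod_add_sq (hs n).2.2 (ht n).2.2]
  exact mul_integral_prod_le_integral_add_sq h𝒜 hℬ hmix (hs n).1 (ht n).1 (hs n).2.1 (ht n).2.1

theorem abs_integral_mul_le_of_mixing (h𝒜 : 𝒜 ≤ m) (hℬ : ℬ ≤ m)
    (hmix : ∀ A B, MeasurableSet[𝒜] A → MeasurableSet[ℬ] B →
      c * (P.real A * P.real B) ≤ P.real (A ∩ B))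
    {u v : Ω → ℝ} (hu : Measurable[𝒜] u) (hv : Measurable[ℬ] v) (hu2 : MemLp u 2 P)
    (hv2 : MemLp v 2 P) (hu0 : ∫ ω, u ω ∂P = 0) :
    |∫ ω, u ω * v ω ∂P| ≤ (1 - c) * ((eLpNorm u 2 P).toReal * (eLpNorm v 2 P).toReal) := by
  have hc : c ≤ 1 := by simpa using hmix _ _ MeasurableSet.univ MeasurableSet.univ
  have h := abs_real_inner_le_of_forall_norm_add_smul (x := hu2.toLp u) (y := hv2.toLp v) hc
    fun t => by
      have hmoment := mul_norm_toLp_sq_le_of_mixing h𝒜 hℬ hmix hu (hv.const_smul t) hu2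
        (hv2.const_smul t)
      rwa [hu0, mul_zero, zero_mul, add_zero, MemLp.toLp_const_smul] at hmoment
  rwa [MemLp.inner_toLp, Lp.norm_toLp, Lp.norm_toLp] at h

end Mixing

section PsiPrime

variable {Ω : Type*} {m : MeasurableSpace Ω}

noncomputable def psiPrime (P : Measure Ω) (𝒜 ℬ : MeasurableSpace Ω) : ℝ :=
  sInf {r : ℝ | ∃ A B : Set Ω, MeasurableSet[𝒜] A ∧ MeasurableSet[ℬ] B ∧
    0 < (P A).toReal * (P B).toReal ∧ r = (P (A ∩ B)).toReal / ((P A).toReal * (P B).toReal)}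

variable {P : Measure Ω} {𝒜 ℬ : MeasurableSpace Ω} {A B : Set Ω}

theorem psiPrime_le_div (hA : MeasurableSet[𝒜] A) (hB : MeasurableSet[ℬ] B)
    (hAB : 0 < P.real A * P.real B) :
    psiPrime P 𝒜 ℬ ≤ P.real (A ∩ B) / (P.real A * P.real B) :=
  csInf_le ⟨0, by rintro _ ⟨A, B, -, -, -, rfl⟩; positivity⟩ ⟨A, B, hA, hB, hAB, rfl⟩

theorem psiPrime_le_one [IsProbabilityMeasure P] : psiPrime P 𝒜 ℬ ≤ 1 := by
  simpa using psiPrime_le_div (P := P) (@MeasurableSet.univ _ 𝒜) (@MeasurableSet.univ _ ℬ)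
    (by simp)

theorem psiPrime_mul_le_measureReal_inter (hA : MeasurableSet[𝒜] A)
    (hB : MeasurableSet[ℬ] B) :
    psiPrime P 𝒜 ℬ * (P.real A * P.real B) ≤ P.real (A ∩ B) := by
  rcases (show 0 ≤ P.real A * P.real B by positivity).eq_or_lt with hAB | hAB
  · rw [← hAB, mul_zero]
    exact measureReal_nonneg
  · exact (le_div_iff₀ hAB).1 (psiPrime_le_div hA hB hAB)

end PsiPrime

/-- Bradley's lemma: the maximal correlation coefficient between two sub-σ-algebras
is bounded by `1 - ψ'`, where `ψ'` is the lower ψ-mixing coefficient. -/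
theorem rho_le_one_sub_psi_prime
    {Ω : Type*} {m : MeasurableSpace Ω} (P : Measure Ω) [IsProbabilityMeasure P]
    (𝒜 ℬ : MeasurableSpace Ω) (h𝒜 : 𝒜 ≤ m) (hℬ : ℬ ≤ m) :
    sSup {r : ℝ | ∃ X Y : Ω → ℝ,
        Measurable[𝒜] X ∧ Measurable[ℬ] Y ∧
        MemLp X 2 P ∧ MemLp Y 2 P ∧
        eLpNorm (fun ω => X ω - ∫ ω', X ω' ∂P) 2 P ≠ 0 ∧
        eLpNorm (fun ω => Y ω - ∫ ω', Y ω' ∂P) 2 P ≠ 0 ∧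
        r = |((∫ ω, X ω * Y ω ∂P) - (∫ ω, X ω ∂P) * (∫ ω, Y ω ∂P)) /
          ((eLpNorm (fun ω => X ω - ∫ ω', X ω' ∂P) 2 P).toReal *
            (eLpNorm (fun ω => Y ω - ∫ ω', Y ω' ∂P) 2 P).toReal)|}
      ≤ 1 - sInf {r : ℝ | ∃ A B : Set Ω,
        MeasurableSet[𝒜] A ∧ MeasurableSet[ℬ] B ∧
        0 < (P A).toReal * (P B).toReal ∧
        r = (P (A ∩ B)).toReal / ((P A).toReal * (P B).toReal)} := by
  change _ ≤ 1 - psiPrime P 𝒜 ℬ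
  refine Real.sSup_le ?_ (sub_nonneg.2 psiPrime_le_one)
  rintro _ ⟨X, Y, hX, hY, hX2, hY2, hσX, hσY, rfl⟩
  have hu2 := hX2.sub (memLp_const (∫ ω, X ω ∂P))
  have hv2 := hY2.sub (memLp_const (∫ ω, Y ω ∂P))
  have hcov : (∫ ω, X ω * Y ω ∂P) - (∫ ω, X ω ∂P) * (∫ ω, Y ω ∂P)
      = ∫ ω, (X ω - ∫ ω', X ω' ∂P) * (Y ω - ∫ ω', Y ω' ∂P) ∂P :=
    (covariance_eq_sub hX2 hY2).symm
  have hcentered : ∫ ω, (X ω - ∫ ω', X ω' ∂P) ∂P = 0 := by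
    simp [integral_sub (hX2.integrable one_le_two) (integrable_const _)]
  have hbound := abs_integral_mul_le_of_mixing h𝒜 hℬ
    (fun _ _ => psiPrime_mul_le_measureReal_inter)
    (hX.sub_const _) (hY.sub_const _) hu2 hv2 hcentered
  have hσ : 0 < (eLpNorm (fun ω => X ω - ∫ ω', X ω' ∂P) 2 P).toReal *
      (eLpNorm (fun ω => Y ω - ∫ ω', Y ω' ∂P) 2 P).toReal :=
    mul_pos (ENNReal.toReal_pos hσX hu2.eLpNorm_ne_top)
      (ENNReal.toReal_pos hσY hv2.eLpNorm_ne_top)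
  rw [hcov, abs_div, abs_of_pos hσ]
  exact (div_le_iff₀ hσ).2 hbound
end

section
/- Let (ξ_k)_{k≥1} be a Markov chain with transition kernels Q_k(x,A) = P(ξ_k ∈ A | ξ_{k-1} = x) and marginals P_k, satisfying: for every k ≥ 2 there is a set S'_k with P_{k-1}(S'_k) = 1 such that a P_k(A) ≤ Q_k(x,A) ≤ b P_k(A) for all x ∈ S'_k and A measurable, where 0 < a ≤ 1 ≤ b. Let X_j = g_j(ξ_j) for measurable functions g_j, S_n = X_1 + ... + X_n, f_j(u) = E(exp(i u X_j)), and γ = a⁴/b. Then |E(exp(i u S_n))|⁴ ≤ ∏_{j=1}^n [1 - (γ/2)(1 - |f_j(u)|²)] for all u ∈ ℝ. -/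
/-
Conditioning on the past turns `E exp(iuS_n)` into `∫ exp(iu g_1) V dP_1`, where `V` is the
conditional characteristic function of `X_2 + ⋯ + X_n` given `ξ_1`, computed through the kernels.
Since `Q_k(x, ·) ≥ a P_k`, the kernel integral of a function bounded by `M` lies within `(1 - a) M`
of `a` times its `P_k`-integral. Over two consecutive steps `k, k + 1` this contracts the bound by
`D_k = 1 - a² (1 - |f_k(u)|)`, so `|E exp(iuS_n)|` is at most both `D_1 D_3 D_5 ⋯` and
`D_2 D_4 ⋯`; hence `|E exp(iuS_n)|² ≤ ∏ D_j`, and `D_j² ≤ 1 - (γ / 2) (1 - |f_j(u)|²)`.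
-/

open MeasureTheory

section

open ProbabilityTheory

section Domination

variable {α E : Type*} [MeasurableSpace α] [NormedAddCommGroup E] [NormedSpace ℝ E]
  {μ ν : Measure α} [IsProbabilityMeasure μ] [IsProbabilityMeasure ν] {a M : ℝ} {f : α → E}

/-- Splitting `μ = a • ν + (μ - a • ν)`, only the remainder, of mass `1 - a`, is left over. -/
lemma norm_integral_sub_smul_integral_le (ha : 0 ≤ a) (hνμ : ENNReal.ofReal a • ν ≤ μ)
    (hf : AEStronglyMeasurable f μ) (hfM : ∀ᵐ x ∂μ, ‖f x‖ ≤ M) :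
    ‖∫ x, f x ∂μ - a • ∫ x, f x ∂ν‖ ≤ (1 - a) * M := by
  have := isFiniteMeasure_of_le μ hνμ
  set ρ := μ - ENNReal.ofReal a • ν
  have hμ : μ = ρ + ENNReal.ofReal a • ν := (Measure.sub_add_cancel_of_le hνμ).symm
  have hρμ : ρ ≤ μ := hμ ▸ Measure.le_add_right le_rfl
  have hfμ : Integrable f μ := Integrable.of_bound hf M hfM
  have ha1 : ENNReal.ofReal a ≤ 1 := by simpa using hνμ Set.univ
  have hρ : ρ.real Set.univ = 1 - a := by
    rw [measureReal_def, Measure.sub_apply MeasurableSet.univ hνμ]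
    simp [ENNReal.toReal_sub_of_le ha1 ENNReal.one_ne_top, ha]
  have hsplit : ∫ x, f x ∂μ = ∫ x, f x ∂ρ + a • ∫ x, f x ∂ν := by
    conv_lhs => rw [hμ]
    rw [integral_add_measure (hfμ.mono_measure hρμ) (hfμ.mono_measure hνμ),
      integral_smul_measure, ENNReal.toReal_ofReal ha]
  rw [hsplit, add_sub_cancel_right, ← hρ, mul_comm]
  exact norm_integral_le_of_norm_le_const
    (Measure.AbsolutelyContinuous.ae_le (Measure.absolutelyContinuous_of_le hρμ) hfM)

lemma norm_integral_le_of_ofReal_smul_le (ha : 0 ≤ a) (hνμ : ENNReal.ofReal a • ν ≤ μ)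
    (hf : AEStronglyMeasurable f μ) (hfM : ∀ᵐ x ∂μ, ‖f x‖ ≤ M) :
    ‖∫ x, f x ∂μ‖ ≤ a * ‖∫ x, f x ∂ν‖ + (1 - a) * M := by
  have h := norm_integral_sub_smul_integral_le ha hνμ hf hfM
  calc ‖∫ x, f x ∂μ‖ ≤ ‖a • ∫ x, f x ∂ν‖ + ‖∫ x, f x ∂μ - a • ∫ x, f x ∂ν‖ :=
        norm_le_norm_add_norm_sub' _ _
    _ ≤ a * ‖∫ x, f x ∂ν‖ + (1 - a) * M := by
        rw [norm_smul, Real.norm_of_nonneg ha]; gcongr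

end Domination

lemma norm_integral_mul_le_of_norm_sub_le {α : Type*} [MeasurableSpace α] {μ : Measure α}
    [IsProbabilityMeasure μ] {e W : α → ℂ} {C : ℂ} {R : ℝ} (he : AEStronglyMeasurable e μ)
    (hW : AEStronglyMeasurable W μ) (he1 : ∀ x, ‖e x‖ ≤ 1) (hWC : ∀ᵐ x ∂μ, ‖W x - C‖ ≤ R) :
    ‖∫ x, e x * W x ∂μ‖ ≤ ‖C‖ * ‖∫ x, e x ∂μ‖ + R := by
  have he_int : Integrable e μ := Integrable.of_bound he 1 (.of_forall he1)
  have hrest : ∀ᵐ x ∂μ, ‖e x * (W x - C)‖ ≤ R := by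
    filter_upwards [hWC] with x hx
    rw [norm_mul]
    exact (mul_le_of_le_one_left (norm_nonneg _) (he1 x)).trans hx
  have hrest_int : Integrable (fun x => e x * (W x - C)) μ :=
    Integrable.of_bound (he.mul (hW.sub aestronglyMeasurable_const)) R hrest
  have hsplit : ∫ x, e x * W x ∂μ = C * ∫ x, e x ∂μ + ∫ x, e x * (W x - C) ∂μ := by
    rw [← integral_const_mul, ← integral_add (he_int.const_mul C) hrest_int]
    congr 1 with x
    ring
  rw [hsplit, ← norm_mul]
  refine (norm_add_le _ _).trans (add_le_add_right ?_ _)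
  simpa using norm_integral_le_of_norm_le_const hrest

lemma ofReal_smul_le_of_forall_mul_toReal_le {α : Type*} [MeasurableSpace α] {μ ν : Measure α}
    [IsFiniteMeasure μ] [IsFiniteMeasure ν] {a : ℝ} (ha : 0 ≤ a)
    (h : ∀ A, MeasurableSet A → a * (ν A).toReal ≤ (μ A).toReal) :
    ENNReal.ofReal a • ν ≤ μ := by
  refine Measure.le_iff.2 fun A hA => ?_
  rw [Measure.smul_apply, smul_eq_mul, ← ENNReal.toReal_le_toReal
    (ENNReal.mul_ne_top ENNReal.ofReal_ne_top (measure_ne_top _ _)) (measure_ne_top _ _),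
    ENNReal.toReal_mul, ENNReal.toReal_ofReal ha]
  exact h A hA

lemma absolutelyContinuous_of_forall_toReal_le_mul {α : Type*} [MeasurableSpace α]
    {μ ν : Measure α} [IsFiniteMeasure μ] {b : ℝ}
    (h : ∀ A, MeasurableSet A → (μ A).toReal ≤ b * (ν A).toReal) : μ ≪ ν := by
  refine Measure.AbsolutelyContinuous.mk fun A hA hνA => ?_
  have := h A hA
  rw [hνA, ENNReal.toReal_zero, mul_zero] at this
  exact (ENNReal.toReal_eq_zero_iff _).1 (le_antisymm this ENNReal.toReal_nonneg)
    |>.resolve_right (measure_ne_top _ _)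

lemma ae_ofReal_smul_le_and_absolutelyContinuous {α : Type*} [MeasurableSpace α]
    {π ν : Measure α} [IsProbabilityMeasure π] [IsFiniteMeasure ν] {κ : Kernel α α}
    [IsFiniteKernel κ] {a b : ℝ} (ha : 0 ≤ a)
    (h : ∃ S' : Set α, MeasurableSet S' ∧ π S' = 1 ∧ ∀ x ∈ S', ∀ A : Set α, MeasurableSet A →
      a * (ν A).toReal ≤ (κ x A).toReal ∧ (κ x A).toReal ≤ b * (ν A).toReal) :
    ∀ᵐ x ∂π, ENNReal.ofReal a • ν ≤ κ x ∧ κ x ≪ ν := by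
  obtain ⟨S', hS', hS'1, hS'dom⟩ := h
  filter_upwards [(mem_ae_iff_prob_eq_one hS').2 hS'1] with x hx
  exact ⟨ofReal_smul_le_of_forall_mul_toReal_le ha fun A hA => (hS'dom x hx A hA).1,
    absolutelyContinuous_of_forall_toReal_le_mul fun A hA => (hS'dom x hx A hA).2⟩

lemma sq_one_sub_sq_mul_one_sub_le {a b t : ℝ} (ha : 0 ≤ a) (ha1 : a ≤ 1) (hb1 : 1 ≤ b)
    (ht0 : 0 ≤ t) (ht1 : t ≤ 1) :
    (1 - a ^ 2 * (1 - t)) ^ 2 ≤ 1 - a ^ 4 / b / 2 * (1 - t ^ 2) := by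
  have hγ : a ^ 4 / b ≤ a ^ 2 :=
    (div_le_self (by positivity) hb1).trans (pow_le_pow_of_le_one ha ha1 (by norm_num))
  have hx : a ^ 2 * (1 - t) ≤ 1 := mul_le_one₀ (pow_le_one₀ ha ha1) (by linarith) (by linarith)
  -- with `x = a² (1 - t)`: `(1 - x)² ≤ 1 - x ≤ 1 - (a² / 2) (1 - t²)`
  have h1 : (1 - a ^ 2 * (1 - t)) ^ 2 ≤ 1 - a ^ 2 / 2 * (1 - t ^ 2) := by
    nlinarith [mul_nonneg (mul_nonneg (sq_nonneg a) (sub_nonneg.2 ht1)) (sub_nonneg.2 hx),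
      mul_nonneg (sq_nonneg a) (sq_nonneg (1 - t))]
  have h2 : 1 - a ^ 2 / 2 * (1 - t ^ 2) ≤ 1 - a ^ 4 / b / 2 * (1 - t ^ 2) := by
    have : 0 ≤ 1 - t ^ 2 := by nlinarith
    nlinarith
  linarith

/-- `alternateProd D m k = D k * D (k + 2) * D (k + 4) * ⋯`, with `⌈m / 2⌉` factors. -/
def alternateProd (D : ℕ → ℝ) : ℕ → ℕ → ℝ
  | 0, _ => 1
  | 1, k => D k
  | m + 2, k => D k * alternateProd D m (k + 2)

lemma alternateProd_nonneg {D : ℕ → ℝ} (hD : ∀ k, 0 ≤ D k) : ∀ m k, 0 ≤ alternateProd D m k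
  | 0, _ => zero_le_one
  | 1, k => hD k
  | m + 2, k => mul_nonneg (hD k) (alternateProd_nonneg hD m (k + 2))

lemma alternateProd_mul_alternateProd_succ (D : ℕ → ℝ) :
    ∀ m k, alternateProd D m (k + 1) * alternateProd D (m + 1) k =
      ∏ j ∈ Finset.Ico k (k + m + 1), D j
  | 0, k => by simp [alternateProd]
  | m + 1, k => by
    rw [Finset.prod_eq_prod_Ico_succ_bot (by omega), show k + (m + 1) + 1 = k + 1 + m + 1 by omega,
      ← alternateProd_mul_alternateProd_succ D m (k + 1), alternateProd]
    ring

section MarkovProperty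

variable {Ω S : Type*} {m mΩ : MeasurableSpace Ω} [MeasurableSpace S] {P : Measure Ω}
  [IsFiniteMeasure P] {X Y : Ω → S} {κ : Kernel S S} [IsMarkovKernel κ]

lemma condExp_comp_ae_eq_integral_kernel_of_real (hY : Measurable Y)
    (hκ : ∀ h : S → ℝ, Measurable h → (∀ y, |h y| ≤ 1) →
      P[fun ω => h (Y ω) | m] =ᵐ[P] fun ω => ∫ y, h y ∂κ (X ω))
    {H : S → ℂ} (hH : Measurable H) (hH1 : ∀ y, ‖H y‖ ≤ 1) :
    P[fun ω => H (Y ω) | m] =ᵐ[P] fun ω => ∫ y, H y ∂κ (X ω) := by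
  have hcomp : ∀ h : S → ℝ, Measurable h → (∀ y, |h y| ≤ 1) →
      Integrable (fun ω => (h (Y ω) : ℂ)) P ∧
      P[fun ω => (h (Y ω) : ℂ) | m] =ᵐ[P] fun ω => ((∫ y, h y ∂κ (X ω) : ℝ) : ℂ) := by
    intro h hh hh1
    have hreal : Integrable (fun ω => h (Y ω)) P :=
      Integrable.of_bound (hh.comp hY).aestronglyMeasurable 1
        (.of_forall fun ω => by simpa using hh1 (Y ω))
    refine ⟨Complex.ofRealCLM.integrable_comp hreal, ?_⟩
    filter_upwards [(Complex.ofRealCLM.comp_condExp_comm (m := m) hreal).symm,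
      hκ h hh hh1] with ω hω hω'
    simp only [Function.comp_def, Complex.ofRealCLM_apply] at hω
    rw [hω, hω']
  have hre : ∀ y, |(H y).re| ≤ 1 := fun y => (Complex.abs_re_le_norm _).trans (hH1 y)
  have him : ∀ y, |(H y).im| ≤ 1 := fun y => (Complex.abs_im_le_norm _).trans (hH1 y)
  obtain ⟨hre_int, hre_eq⟩ := hcomp _ (by fun_prop) hre
  obtain ⟨him_int, him_eq⟩ := hcomp _ (by fun_prop) him
  have hsplit : (fun ω => H (Y ω)) =
      (fun ω => ((H (Y ω)).re : ℂ)) + Complex.I • fun ω => ((H (Y ω)).im : ℂ) := by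
    ext ω
    simp [mul_comm Complex.I, Complex.re_add_im]
  rw [hsplit]
  filter_upwards [condExp_add hre_int (him_int.smul Complex.I) m,
    condExp_smul (μ := P) Complex.I (fun ω => ((H (Y ω)).im : ℂ)) m, hre_eq, him_eq]
    with ω h1 h2 h3 h4
  have hκint : Integrable H (κ (X ω)) :=
    Integrable.of_bound hH.aestronglyMeasurable 1 (.of_forall hH1)
  rw [h1, Pi.add_apply, h2, Pi.smul_apply, h3, h4, ← integral_re_add_im hκint]
  simp [mul_comm Complex.I]

lemma integral_mul_comp_eq_integral_mul_integral_kernel (hm : m ≤ mΩ) (hY : Measurable Y)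
    (hκ : ∀ h : S → ℝ, Measurable h → (∀ y, |h y| ≤ 1) →
      P[fun ω => h (Y ω) | m] =ᵐ[P] fun ω => ∫ y, h y ∂κ (X ω))
    {F : Ω → ℂ} (hF : StronglyMeasurable[m] F) (hF1 : ∀ ω, ‖F ω‖ ≤ 1)
    {H : S → ℂ} (hH : Measurable H) (hH1 : ∀ y, ‖H y‖ ≤ 1) :
    ∫ ω, F ω * H (Y ω) ∂P = ∫ ω, F ω * ∫ y, H y ∂κ (X ω) ∂P := by
  have hHY : Integrable (fun ω => H (Y ω)) P :=
    Integrable.of_bound (hH.comp hY).aestronglyMeasurable 1 (.of_forall fun ω => hH1 (Y ω))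
  have hFHY : Integrable (fun ω => F ω * H (Y ω)) P :=
    Integrable.of_bound ((hF.mono hm).aestronglyMeasurable.mul hHY.1) 1
      (.of_forall fun ω => by rw [norm_mul]; exact mul_le_one₀ (hF1 ω) (norm_nonneg _) (hH1 _))
  rw [← integral_condExp hm]
  refine integral_congr_ae ?_
  filter_upwards [condExp_bilin_of_stronglyMeasurable_left (ContinuousLinearMap.mul ℝ ℂ) hF
    hFHY hHY, condExp_comp_ae_eq_integral_kernel_of_real hY hκ hH hH1] with ω h1 h2
  simp only [ContinuousLinearMap.mul_apply'] at h1
  rw [h1, h2]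

end MarkovProperty

lemma norm_exp_ofReal_mul_ofReal_mul_I (u x : ℝ) : ‖Complex.exp (u * x * Complex.I)‖ = 1 := by
  rw [← Complex.ofReal_mul, Complex.norm_exp_ofReal_mul_I]

variable {S : Type*}

noncomputable def phase (g : ℕ → S → ℝ) (u : ℝ) (k : ℕ) (y : S) : ℂ :=
  Complex.exp (u * g k y * Complex.I)

lemma norm_phase (g : ℕ → S → ℝ) (u : ℝ) (k : ℕ) (y : S) : ‖phase g u k y‖ = 1 :=
  norm_exp_ofReal_mul_ofReal_mul_I u (g k y)

variable [MeasurableSpace S]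

lemma measurable_phase {g : ℕ → S → ℝ} (hg : ∀ k, Measurable (g k)) (u : ℝ) (k : ℕ) :
    Measurable (phase g u k) := by
  unfold phase; have := hg k; fun_prop

/-- `tailCharFun κ g u m k x = E[exp(iu(X_k + ⋯ + X_{k+m-1})) | ξ_{k-1} = x]`, computed through
the transition kernels `κ k, …, κ (k + m - 1)`. -/
noncomputable def tailCharFun (κ : ℕ → Kernel S S) (g : ℕ → S → ℝ) (u : ℝ) : ℕ → ℕ → S → ℂ
  | 0, _, _ => 1
  | m + 1, k, x => ∫ y, phase g u k y * tailCharFun κ g u m (k + 1) y ∂κ k x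

section TailCharFun

variable {κ : ℕ → Kernel S S} [∀ k, IsMarkovKernel (κ k)] {g : ℕ → S → ℝ} {u : ℝ}

lemma stronglyMeasurable_tailCharFun (hg : ∀ k, Measurable (g k)) :
    ∀ m k, StronglyMeasurable (tailCharFun κ g u m k)
  | 0, _ => stronglyMeasurable_const
  | m + 1, k => StronglyMeasurable.integral_kernel_prod_right'
      (f := fun p : S × S => phase g u k p.2 * tailCharFun κ g u m (k + 1) p.2)
      (((measurable_phase hg u k).stronglyMeasurable.mul
        (stronglyMeasurable_tailCharFun hg m (k + 1))).comp_measurable measurable_snd)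

lemma norm_tailCharFun_le_one : ∀ m k x, ‖tailCharFun κ g u m k x‖ ≤ 1
  | 0, _, _ => by simp [tailCharFun]
  | m + 1, k, x => by
    have h y : ‖phase g u k y * tailCharFun κ g u m (k + 1) y‖ ≤ 1 := by
      rw [norm_mul, norm_phase, one_mul]
      exact norm_tailCharFun_le_one m (k + 1) y
    simpa [tailCharFun] using norm_integral_le_of_norm_le_const (μ := κ k x) (.of_forall h)

end TailCharFun

section DominatedChain

variable {π : ℕ → Measure S} [∀ k, IsProbabilityMeasure (π k)] {κ : ℕ → Kernel S S}
  [∀ k, IsMarkovKernel (κ k)] {g : ℕ → S → ℝ} {u a : ℝ}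

/-- The factor `1 - a² (1 - |f_k(u)|)` by which two consecutive steps of the chain contract. -/
noncomputable def contractionFactor (π : ℕ → Measure S) (g : ℕ → S → ℝ) (u a : ℝ) (k : ℕ) : ℝ :=
  1 - a ^ 2 * (1 - ‖∫ y, phase g u k y ∂π k‖)

lemma norm_integral_phase_le_one (μ : Measure S) [IsProbabilityMeasure μ] (k : ℕ) :
    ‖∫ y, phase g u k y ∂μ‖ ≤ 1 := by
  simpa using norm_integral_le_of_norm_le_const (μ := μ)
    (.of_forall fun y => (norm_phase g u k y).le)

lemma contractionFactor_nonneg (ha0 : 0 ≤ a) (ha1 : a ≤ 1) (k : ℕ) :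
    0 ≤ contractionFactor π g u a k := by
  have := norm_integral_phase_le_one (g := g) (u := u) (π k) k
  have : a ^ 2 ≤ 1 := pow_le_one₀ ha0 ha1
  unfold contractionFactor
  nlinarith [norm_nonneg (∫ y, phase g u k y ∂π k)]

lemma norm_integral_phase_le (hg : ∀ k, Measurable (g k)) (ha0 : 0 ≤ a) {k : ℕ}
    {μ : Measure S} [IsProbabilityMeasure μ] (hμ : ENNReal.ofReal a • π k ≤ μ) :
    ‖∫ y, phase g u k y ∂μ‖ ≤ a * ‖∫ y, phase g u k y ∂π k‖ + (1 - a) := by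
  simpa using norm_integral_le_of_ofReal_smul_le ha0 hμ
    (measurable_phase hg u k).aestronglyMeasurable (.of_forall fun y => (norm_phase g u k y).le)

/-- The inner integral stays within `(1 - a) M` of the constant `a • ∫ phase * h ∂π (k + 1)`, and
the outer integral of `phase g u k` has norm at most `a |f_k(u)| + 1 - a`. -/
lemma norm_integral_phase_mul_integral_le (hg : ∀ k, Measurable (g k)) (ha0 : 0 ≤ a) {k : ℕ}
    (hdom : ∀ᵐ x ∂π k, ENNReal.ofReal a • π (k + 1) ≤ κ (k + 1) x ∧ κ (k + 1) x ≪ π (k + 1))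
    {μ : Measure S} [IsProbabilityMeasure μ] (hμ : ENNReal.ofReal a • π k ≤ μ) (hμπ : μ ≪ π k)
    {h : S → ℂ} (hh : StronglyMeasurable h) {M : ℝ} (hM : ∀ᵐ z ∂π (k + 1), ‖h z‖ ≤ M) :
    ‖∫ y, phase g u k y * ∫ z, phase g u (k + 1) z * h z ∂κ (k + 1) y ∂μ‖ ≤
      contractionFactor π g u a k * M := by
  have hM0 : 0 ≤ M := by
    obtain ⟨z, hz⟩ := hM.exists
    exact (norm_nonneg _).trans hz
  have hf : StronglyMeasurable fun z => phase g u (k + 1) z * h z :=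
    (measurable_phase hg u (k + 1)).stronglyMeasurable.mul hh
  have hfM : ∀ᵐ z ∂π (k + 1), ‖phase g u (k + 1) z * h z‖ ≤ M := by
    filter_upwards [hM] with z hz
    rwa [norm_mul, norm_phase, one_mul]
  set c := ∫ z, phase g u (k + 1) z * h z ∂π (k + 1)
  have hc : ‖a • c‖ ≤ a * M := by
    rw [norm_smul, Real.norm_of_nonneg ha0]
    exact mul_le_mul_of_nonneg_left
      ((norm_integral_le_of_norm_le_const hfM).trans_eq (by simp)) ha0
  have hW : ∀ᵐ y ∂μ, ‖∫ z, phase g u (k + 1) z * h z ∂κ (k + 1) y - a • c‖ ≤ (1 - a) * M := by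
    filter_upwards [hμπ.ae_le hdom] with y ⟨hle, hac⟩
    exact norm_integral_sub_smul_integral_le ha0 hle hf.aestronglyMeasurable (hac.ae_le hfM)
  have hWmeas : StronglyMeasurable fun y => ∫ z, phase g u (k + 1) z * h z ∂κ (k + 1) y :=
    StronglyMeasurable.integral_kernel_prod_right' (f := fun p : S × S => _ * h p.2)
      (hf.comp_measurable measurable_snd)
  calc _ ≤ ‖a • c‖ * ‖∫ y, phase g u k y ∂μ‖ + (1 - a) * M :=
        norm_integral_mul_le_of_norm_sub_le (measurable_phase hg u k).aestronglyMeasurable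
          hWmeas.aestronglyMeasurable (fun y => (norm_phase g u k y).le) hW
    _ ≤ a * M * (a * ‖∫ y, phase g u k y ∂π k‖ + (1 - a)) + (1 - a) * M := by
        gcongr
        exact norm_integral_phase_le hg ha0 hμ
    _ = contractionFactor π g u a k * M := by unfold contractionFactor; ring

lemma norm_tailCharFun_le (hg : ∀ k, Measurable (g k)) (ha0 : 0 ≤ a) (ha1 : a ≤ 1)
    (hdom : ∀ k, 1 ≤ k →
      ∀ᵐ x ∂π k, ENNReal.ofReal a • π (k + 1) ≤ κ (k + 1) x ∧ κ (k + 1) x ≪ π (k + 1))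
    (m : ℕ) :
    (∀ k, 1 ≤ k → ∀ᵐ x ∂π k,
      ‖tailCharFun κ g u m (k + 1) x‖ ≤ alternateProd (contractionFactor π g u a) m (k + 1)) ∧
    (∀ k, 1 ≤ k → ∀ (μ : Measure S) [IsProbabilityMeasure μ],
      ENNReal.ofReal a • π k ≤ μ → μ ≪ π k →
      ‖∫ y, phase g u k y * tailCharFun κ g u m (k + 1) y ∂μ‖ ≤
        alternateProd (contractionFactor π g u a) (m + 1) k) := by
  induction m with
  | zero =>
    refine ⟨fun k _ => .of_forall fun x => by simp [tailCharFun, alternateProd],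
      fun k _ μ _ hμ _ => ?_⟩
    have hD : a * ‖∫ y, phase g u k y ∂π k‖ + (1 - a) ≤ contractionFactor π g u a k := by
      have := norm_integral_phase_le_one (g := g) (u := u) (π k) k
      unfold contractionFactor
      nlinarith [mul_nonneg (mul_nonneg ha0 (sub_nonneg.2 ha1)) (sub_nonneg.2 this)]
    simpa [tailCharFun, alternateProd] using (norm_integral_phase_le hg ha0 hμ).trans hD
  | succ m ih =>
    obtain ⟨ihae, ihint⟩ := ih
    refine ⟨fun k hk => ?_, fun k hk μ _ hμ hμπ => ?_⟩
    · filter_upwards [hdom k hk] with x ⟨hle, hac⟩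
      exact ihint (k + 1) (by omega) (κ (k + 1) x) hle hac
    · exact norm_integral_phase_mul_integral_le hg ha0 (hdom k hk) hμ hμπ
        (stronglyMeasurable_tailCharFun hg m (k + 2)) (ihae (k + 1) (by omega))

/-- Starting the two-step contraction at step `1` and at step `2` gives two bounds whose product
is the full product of the contraction factors. -/
lemma sq_norm_integral_phase_mul_tailCharFun_le (hg : ∀ k, Measurable (g k)) (ha0 : 0 ≤ a)
    (ha1 : a ≤ 1) (hdom : ∀ k, 1 ≤ k →
      ∀ᵐ x ∂π k, ENNReal.ofReal a • π (k + 1) ≤ κ (k + 1) x ∧ κ (k + 1) x ≪ π (k + 1))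
    (n : ℕ) :
    ‖∫ y, phase g u 1 y * tailCharFun κ g u n 2 y ∂π 1‖ ^ 2 ≤
      ∏ j ∈ Finset.Icc 1 (n + 1), contractionFactor π g u a j := by
  obtain ⟨hae, hint⟩ := norm_tailCharFun_le hg ha0 ha1 hdom n
  have hodd := hint 1 le_rfl (π 1)
    (Measure.le_iff.2 fun A _ => mul_le_of_le_one_left bot_le (ENNReal.ofReal_le_one.2 ha1))
    Measure.AbsolutelyContinuous.rfl
  have heven : ‖∫ y, phase g u 1 y * tailCharFun κ g u n 2 y ∂π 1‖ ≤
      alternateProd (contractionFactor π g u a) n 2 := by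
    refine (norm_integral_le_of_norm_le_const
      (C := alternateProd (contractionFactor π g u a) n 2) ?_).trans_eq (by simp)
    filter_upwards [hae 1 le_rfl] with y hy
    rwa [norm_mul, norm_phase, one_mul]
  rw [sq, ← Finset.Ico_add_one_right_eq_Icc, show n + 1 + 1 = 1 + n + 1 by ring,
    ← alternateProd_mul_alternateProd_succ]
  exact mul_le_mul heven hodd (norm_nonneg _)
    (alternateProd_nonneg (contractionFactor_nonneg ha0 ha1) _ _)

end DominatedChain

section Representation

variable {Ω : Type*} {mΩ : MeasurableSpace Ω} {P : Measure Ω} [IsProbabilityMeasure P]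
  {ξ : ℕ → Ω → S} {κ : ℕ → Kernel S S} [∀ k, IsMarkovKernel (κ k)] {g : ℕ → S → ℝ}

lemma integral_exp_sum_eq_integral_mul_tailCharFun (hξ : ∀ k, Measurable (ξ k))
    (hg : ∀ k, Measurable (g k)) (u : ℝ)
    (hMarkov : ∀ k, 1 ≤ k → ∀ h : S → ℝ, Measurable h → (∀ y, |h y| ≤ 1) →
      P[fun ω => h (ξ (k + 1) ω) |
          ⨆ i ∈ Finset.Icc 1 k, MeasurableSpace.comap (ξ i) inferInstance]
        =ᵐ[P] fun ω => ∫ y, h y ∂κ (k + 1) (ξ k ω))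
    (m : ℕ) {k : ℕ} (hk : 1 ≤ k) :
    ∫ ω, Complex.exp (u * (∑ j ∈ Finset.Icc 1 (k + m), g j (ξ j ω)) * Complex.I) ∂P =
      ∫ ω, Complex.exp (u * (∑ j ∈ Finset.Icc 1 k, g j (ξ j ω)) * Complex.I) *
        tailCharFun κ g u m (k + 1) (ξ k ω) ∂P := by
  induction m generalizing k with
  | zero => simp [tailCharFun]
  | succ m ih =>
    rw [show k + (m + 1) = k + 1 + m by omega, ih (by omega)]
    set 𝓕 := ⨆ i ∈ Finset.Icc 1 k, MeasurableSpace.comap (ξ i) inferInstance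
    have h𝓕 : 𝓕 ≤ mΩ := iSup₂_le fun i _ => (hξ i).comap_le
    have hsum : Measurable[𝓕] fun ω => ∑ j ∈ Finset.Icc 1 k, g j (ξ j ω) :=
      Finset.measurable_sum _ fun j hj => (hg j).comp (Measurable.of_comap_le
        (le_iSup₂ (f := fun i _ => MeasurableSpace.comap (ξ i) inferInstance) j hj))
    have hF : StronglyMeasurable[𝓕]
        fun ω => Complex.exp (u * (∑ j ∈ Finset.Icc 1 k, g j (ξ j ω)) * Complex.I) :=
      (by fun_prop : Measurable fun t : ℝ => Complex.exp (u * t * Complex.I)).comp hsum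
        |>.stronglyMeasurable
    have hstep := integral_mul_comp_eq_integral_mul_integral_kernel h𝓕 (hξ (k + 1))
      (hMarkov k hk) hF (fun ω => (norm_exp_ofReal_mul_ofReal_mul_I u _).le)
      (H := fun y => phase g u (k + 1) y * tailCharFun κ g u m (k + 2) y)
      ((measurable_phase hg u (k + 1)).mul (stronglyMeasurable_tailCharFun hg m (k + 2)).measurable)
      (fun y => by rw [norm_mul, norm_phase, one_mul]; exact norm_tailCharFun_le_one m (k + 2) y)
    refine Eq.trans ?_ hstep
    congr 1 with ω
    rw [Finset.sum_Icc_succ_top (by omega), phase]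
    push_cast
    rw [← mul_assoc, ← Complex.exp_add]
    ring_nf

lemma integral_exp_sum_eq_integral_phase_mul_tailCharFun (hξ : ∀ k, Measurable (ξ k))
    (hg : ∀ k, Measurable (g k)) (u : ℝ)
    (hMarkov : ∀ k, 1 ≤ k → ∀ h : S → ℝ, Measurable h → (∀ y, |h y| ≤ 1) →
      P[fun ω => h (ξ (k + 1) ω) |
          ⨆ i ∈ Finset.Icc 1 k, MeasurableSpace.comap (ξ i) inferInstance]
        =ᵐ[P] fun ω => ∫ y, h y ∂κ (k + 1) (ξ k ω))
    (n : ℕ) :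
    ∫ ω, Complex.exp (u * (∑ j ∈ Finset.Icc 1 (n + 1), g j (ξ j ω)) * Complex.I) ∂P =
      ∫ y, phase g u 1 y * tailCharFun κ g u n 2 y ∂P.map (ξ 1) := by
  rw [add_comm, integral_exp_sum_eq_integral_mul_tailCharFun hξ hg u hMarkov n le_rfl,
    integral_map (f := fun y => phase g u 1 y * tailCharFun κ g u n 2 y) (hξ 1).aemeasurable
      ((measurable_phase hg u 1).stronglyMeasurable.mul
        (stronglyMeasurable_tailCharFun hg n 2)).aestronglyMeasurable]
  simp [phase]

end Representation

end

/-- For a Markov chain with two-sided kernel domination `a P_k(A) ≤ Q_k(x,A) ≤ b P_k(A)`,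
the characteristic function of the partial sum `S_n = X_1 + ... + X_n` (`X_j = g_j(ξ_j)`)
satisfies `|E(exp(iuS_n))|⁴ ≤ ∏_{j=1}^n [1 - (γ/2)(1 - |f_j(u)|²)]`, with `γ = a⁴/b`. -/
theorem charFun_sum_pow_four_bound
    {Ω S : Type*} {m : MeasurableSpace Ω} [MeasurableSpace S]
    (P : Measure Ω) [IsProbabilityMeasure P]
    (ξ : ℕ → Ω → S) (hξ : ∀ k, Measurable (ξ k))
    (Q : ℕ → ProbabilityTheory.Kernel S S) [∀ k, ProbabilityTheory.IsMarkovKernel (Q k)]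
    -- Markov property: for every `k ≥ 2` and bounded measurable `h`, the conditional
    -- expectation of `h(ξ_k)` given the past `σ(ξ_1, ..., ξ_{k-1})` is `∫ h dQ_k(ξ_{k-1}, ·)`.
    (hMarkov : ∀ k, 2 ≤ k → ∀ h : S → ℝ, Measurable h → (∀ y, |h y| ≤ 1) →
      P[(fun ω => h (ξ k ω)) |
          ⨆ i ∈ Finset.Icc 1 (k - 1), MeasurableSpace.comap (ξ i) inferInstance]
        =ᵐ[P] fun ω => ∫ y, h y ∂(Q k (ξ (k - 1) ω)))
    (a b : ℝ) (ha : 0 < a) (ha1 : a ≤ 1) (hb1 : 1 ≤ b)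
    -- two-sided kernel domination by the marginals `P_k = P ∘ ξ_k⁻¹`
    (hdom : ∀ k, 2 ≤ k → ∃ S' : Set S, MeasurableSet S' ∧
      Measure.map (ξ (k - 1)) P S' = 1 ∧
      ∀ x ∈ S', ∀ A : Set S, MeasurableSet A →
        a * (Measure.map (ξ k) P A).toReal ≤ (Q k x A).toReal ∧
        (Q k x A).toReal ≤ b * (Measure.map (ξ k) P A).toReal)
    (g : ℕ → S → ℝ) (hgmeas : ∀ j, Measurable (g j))
    (n : ℕ) (u : ℝ) :
    ‖∫ ω, Complex.exp (u * (∑ j ∈ Finset.Icc 1 n, g j (ξ j ω)) * Complex.I) ∂P‖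
        ^ 4 ≤
      ∏ j ∈ Finset.Icc 1 n,
        (1 - (a ^ 4 / b) / 2 *
          (1 - ‖∫ ω, Complex.exp (u * g j (ξ j ω) * Complex.I) ∂P‖ ^ 2)) := by
  set π : ℕ → Measure S := fun k => P.map (ξ k)
  have hπ k : IsProbabilityMeasure (π k) := Measure.isProbabilityMeasure_map (hξ k).aemeasurable
  have hf j : ∫ ω, Complex.exp (u * g j (ξ j ω) * Complex.I) ∂P = ∫ y, phase g u j y ∂π j :=
    (integral_map (hξ j).aemeasurable (measurable_phase hgmeas u j).aestronglyMeasurable).symm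
  rcases n with _ | n
  · simp
  have hrep := integral_exp_sum_eq_integral_phase_mul_tailCharFun hξ hgmeas u
    (fun k _ => by simpa using hMarkov (k + 1) (by omega)) n
  have hsq := sq_norm_integral_phase_mul_tailCharFun_le (u := u) hgmeas ha.le ha1
    (fun k hk => ae_ofReal_smul_le_and_absolutelyContinuous ha.le
      (by simpa using hdom (k + 1) (by omega))) n
  rw [hrep, show 4 = 2 * 2 by rfl, pow_mul, Finset.prod_congr rfl fun j _ => by rw [hf j]]
  calc _ ≤ (∏ j ∈ Finset.Icc 1 (n + 1), contractionFactor π g u a j) ^ 2 := by gcongr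
    _ = ∏ j ∈ Finset.Icc 1 (n + 1), contractionFactor π g u a j ^ 2 := (Finset.prod_pow _ _ _).symm
    _ ≤ _ := Finset.prod_le_prod (fun j _ => sq_nonneg _) fun j _ =>
        sq_one_sub_sq_mul_one_sub_le ha.le ha1 hb1 (norm_nonneg _) (norm_integral_phase_le_one _ _)
end

section
/- Let (f_k)_{k≥1} be functions from ℝ to the closed complex unit disc (characteristic functions), and τ_n → ∞ with τ_{n+1}/τ_n → 1. Suppose for a fixed t there is c < 1 and n₀ such that (1/n) Σ_{k=1}^n |f_k(t)|² ≤ c for all n > n₀. Then (1/ln τ_n) Σ_{k=1}^n (1 - |f_k(t)|²) → ∞ as n → ∞. -/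
open Filter Topology

/-!
Since the averages of `‖f k t‖ ^ 2` stay below `c < 1`, the sum `∑_{k ≤ n} (1 - ‖f k t‖ ^ 2)`
grows at least like `(1 - c) n`. On the other hand `τ (n+1) / τ n → 1` means that the increments
of `log τ n` tend to `0`, so by Cesàro `log τ n = o(n)`, and `n / log τ n → ∞`.
-/

theorem Filter.Tendsto.div_natCast_of_tendsto_sub {a : ℕ → ℝ} {ℓ : ℝ}
    (h : Tendsto (fun n => a (n + 1) - a n) atTop (𝓝 ℓ)) :
    Tendsto (fun n : ℕ => a n / n) atTop (𝓝 ℓ) := by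
  have hstart : Tendsto (fun n : ℕ => a 0 / n) atTop (𝓝 0) :=
    tendsto_const_nhds.div_atTop tendsto_natCast_atTop_atTop
  refine (add_zero ℓ ▸ h.cesaro.add hstart).congr' ?_
  filter_upwards [eventually_ne_atTop 0] with n hn
  rw [Finset.sum_range_sub]
  field_simp
  ring

theorem tendsto_log_sub_log_of_tendsto_div {τ : ℕ → ℝ} (hτ : ∀ᶠ n in atTop, 0 < τ n)
    (hratio : Tendsto (fun n => τ (n + 1) / τ n) atTop (𝓝 1)) :
    Tendsto (fun n => Real.log (τ (n + 1)) - Real.log (τ n)) atTop (𝓝 0) := by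
  have hlog := (Real.continuousAt_log one_ne_zero).tendsto.comp hratio
  rw [Real.log_one] at hlog
  refine hlog.congr' ?_
  filter_upwards [hτ, (tendsto_add_atTop_nat 1).eventually hτ] with n hn hn1
  exact Real.log_div hn1.ne' hn.ne'

theorem tendsto_natCast_div_log_atTop {τ : ℕ → ℝ} (hinf : Tendsto τ atTop atTop)
    (hratio : Tendsto (fun n => τ (n + 1) / τ n) atTop (𝓝 1)) :
    Tendsto (fun n : ℕ => n / Real.log (τ n)) atTop atTop := by
  have hlog_pos : ∀ᶠ n in atTop, 0 < Real.log (τ n) :=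
    (hinf.eventually_gt_atTop 1).mono fun n hn => Real.log_pos hn
  have hlog_div : Tendsto (fun n : ℕ => Real.log (τ n) / n) atTop (𝓝 0) :=
    (tendsto_log_sub_log_of_tendsto_div (hinf.eventually_gt_atTop 0)
      hratio).div_natCast_of_tendsto_sub
  have hlog_div' : Tendsto (fun n : ℕ => Real.log (τ n) / n) atTop (𝓝[>] 0) := by
    refine tendsto_nhdsWithin_iff.2 ⟨hlog_div, ?_⟩
    filter_upwards [hlog_pos, eventually_gt_atTop 0] with n hn hn0
    exact div_pos hn (Nat.cast_pos.2 hn0)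
  exact hlog_div'.inv_tendsto_nhdsGT_zero.congr fun n => inv_div _ _

theorem mul_le_sum_one_sub_of_average_le {x : ℕ → ℝ} {c : ℝ} {n : ℕ} (hn : 0 < n)
    (havg : (1 / (n : ℝ)) * ∑ k ∈ Finset.Icc 1 n, x k ≤ c) :
    (1 - c) * n ≤ ∑ k ∈ Finset.Icc 1 n, (1 - x k) := by
  rw [one_div, inv_mul_le_iff₀ (Nat.cast_pos.2 hn)] at havg
  rw [Finset.sum_sub_distrib, Finset.sum_const, Nat.card_Icc, nsmul_eq_mul, mul_one,
    Nat.add_sub_cancel]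
  linarith

theorem condition_B2_implies_B_general
    (f : ℕ → ℝ → ℂ)
    (τ : ℕ → ℝ)
    (hinf : Tendsto τ atTop atTop)
    (hratio : Tendsto (fun n => τ (n + 1) / τ n) atTop (nhds 1))
    (t : ℝ) (c : ℝ) (hc : c < 1) (n₀ : ℕ)
    (havg : ∀ n, n₀ < n → (1 / (n : ℝ)) * ∑ k ∈ Finset.Icc 1 n, ‖f k t‖ ^ 2 ≤ c) :
    Tendsto (fun n => (1 / Real.log (τ n)) *
        ∑ k ∈ Finset.Icc 1 n, (1 - ‖f k t‖ ^ 2)) atTop atTop := by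
  refine tendsto_atTop_mono' atTop ?_
    ((tendsto_natCast_div_log_atTop hinf hratio).const_mul_atTop (sub_pos.2 hc))
  filter_upwards [hinf.eventually_gt_atTop 1, eventually_gt_atTop n₀] with n hτn hn
  have hsum := mul_le_sum_one_sub_of_average_le (n₀.zero_le.trans_lt hn) (havg n hn)
  calc (1 - c) * (n / Real.log (τ n)) = 1 / Real.log (τ n) * ((1 - c) * n) := by ring
    _ ≤ _ := mul_le_mul_of_nonneg_left hsum (by positivity [Real.log_pos hτn])

/-- Condition B₂ implies Condition B: if `|f_k(t)| ≤ 1`, `τ_n → ∞`, `τ_{n+1}/τ_n → 1`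
and the averages `(1/n) Σ |f_k(t)|²` stay below some `c < 1`, then
`(1/ln τ_n) Σ_{k=1}^n (1 - |f_k(t)|²) → ∞`. -/
theorem condition_B2_implies_B
    (f : ℕ → ℝ → ℂ) (hf : ∀ k t, ‖f k t‖ ≤ 1)
    (τ : ℕ → ℝ) (hpos : ∀ n, 0 < τ n)
    (hinf : Tendsto τ atTop atTop)
    (hratio : Tendsto (fun n => τ (n + 1) / τ n) atTop (nhds 1))
    (t : ℝ) (c : ℝ) (hc : c < 1) (n₀ : ℕ)
    (havg : ∀ n, n₀ < n → (1 / (n : ℝ)) * ∑ k ∈ Finset.Icc 1 n, ‖f k t‖ ^ 2 ≤ c) :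
    Tendsto (fun n => (1 / Real.log (τ n)) *
        ∑ k ∈ Finset.Icc 1 n, (1 - ‖f k t‖ ^ 2)) atTop atTop :=
  condition_B2_implies_B_general f τ hinf hratio t c hc n₀ havg
end

section
/- Let (ξ_k) be a Markov chain whose kernels satisfy a P_k(A) ≤ Q_k(x,A) ≤ b P_k(A) with 0 < a ≤ 1, for x in a full-measure set. Let X_k = g_k(ξ_k) be centered with finite variance, τ_n² = Σ_{j=1}^n E(X_j²), σ_n² = E(S_n²). Then (a/(2-a)) τ_n² ≤ σ_n² ≤ ((2-a)/a) τ_n². In particular τ_n² → ∞ if and only if σ_n² → ∞. -/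
/-!
Let `f_i (ξ i) = E[X_i + ⋯ + X_n | ξ 1, …, ξ i]`; backwards from `f_{n+1} = 0` this is
`f_i = g_i + Q_{i+1} f_{i+1}`, so `f_i (ξ i) = X_i + Z_i` with `Z_i = (Q_{i+1} f_{i+1}) (ξ i)`.
Expanding squares with the Markov property gives `σ_n² = ∑ (‖f_i (ξ i)‖² - ‖Z_i‖²)` (norms in
`L²(P)`). The lower domination `a P_{i+1} ≤ Q_{i+1} (x, ·)` makes `Q_{i+1}` a contraction with ratio
`ρ = 1 - a` on centred functions, `‖Z_i‖ ≤ ρ ‖f_{i+1} (ξ (i+1))‖`, and the triangle inequality gives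
`|‖f_i (ξ i)‖ - ‖X_i‖| ≤ ‖Z_i‖`. Cauchy–Schwarz on these finite sequences of norms then yields
`(1-ρ)/(1+ρ) τ_n² ≤ σ_n² ≤ (1+ρ)/(1-ρ) τ_n²`. The upper domination bounds kernel integrals of
integrable functions, which lets the Markov property pass from bounded to square-integrable
functions by truncation.
-/

open MeasureTheory Filter Finset ProbabilityTheory Topology
open scoped ENNReal

section Numeric

lemma sum_Icc_eq_add_sum_Icc_succ {M : Type*} [AddCommMonoid M] (f : ℕ → M) {i n : ℕ}
    (h : i ≤ n) : ∑ j ∈ Icc i n, f j = f i + ∑ j ∈ Icc (i + 1) n, f j := by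
  rw [← add_sum_Ioc_eq_sum_Icc h, Icc_add_one_left_eq_Ioc]

lemma sum_Icc_shift_le {w : ℕ → ℝ} {n : ℕ} (h1 : 0 ≤ w 1) (hn : w (n + 1) = 0) :
    ∑ j ∈ Icc 1 n, w (j + 1) ≤ ∑ j ∈ Icc 1 n, w j := by
  have telescope : ∀ N, ∑ j ∈ Icc 1 N, w (j + 1) + w 1 = ∑ j ∈ Icc 1 N, w j + w (N + 1) := by
    intro N
    induction N with
    | zero => simp
    | succ N ih => rw [sum_Icc_succ_top (by omega), sum_Icc_succ_top (by omega)]; linarith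
  linarith [telescope n]

lemma sum_mul_add_shift_le {ρ : ℝ} (hρ : 0 ≤ ρ) {n : ℕ} (w x u : ℕ → ℝ) (hn : u (n + 1) = 0) :
    ∑ j ∈ Icc 1 n, w j * (x j + ρ * u (j + 1)) ≤
      √(∑ j ∈ Icc 1 n, w j ^ 2) * (√(∑ j ∈ Icc 1 n, x j ^ 2) + ρ * √(∑ j ∈ Icc 1 n, u j ^ 2)) := by
  have hshift : √(∑ j ∈ Icc 1 n, u (j + 1) ^ 2) ≤ √(∑ j ∈ Icc 1 n, u j ^ 2) :=
    Real.sqrt_le_sqrt (sum_Icc_shift_le (w := fun j => u j ^ 2) (sq_nonneg _) (by simp [hn]))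
  have hw := Real.sqrt_nonneg (∑ j ∈ Icc 1 n, w j ^ 2)
  calc ∑ j ∈ Icc 1 n, w j * (x j + ρ * u (j + 1))
      = ∑ j ∈ Icc 1 n, w j * x j + ρ * ∑ j ∈ Icc 1 n, w j * u (j + 1) := by
        rw [mul_sum, ← sum_add_distrib]; exact sum_congr rfl fun j _ => by ring
    _ ≤ √(∑ j ∈ Icc 1 n, w j ^ 2) * √(∑ j ∈ Icc 1 n, x j ^ 2)
        + ρ * (√(∑ j ∈ Icc 1 n, w j ^ 2) * √(∑ j ∈ Icc 1 n, u (j + 1) ^ 2)) := by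
        gcongr <;> exact Real.sum_mul_le_sqrt_mul_sqrt _ _ _
    _ ≤ _ := by nlinarith [mul_le_mul_of_nonneg_left hshift (mul_nonneg hρ hw)]

theorem sum_sq_sub_sq_bounds {ρ : ℝ} (hρ0 : 0 ≤ ρ) (hρ1 : ρ < 1) {n : ℕ} {u v c : ℕ → ℝ}
    (hu : ∀ j, 0 ≤ u j) (hv : ∀ j, 0 ≤ v j) (hc : ∀ j, 0 ≤ c j) (hn : u (n + 1) = 0)
    (hvu : ∀ j ∈ Icc 1 n, v j ≤ ρ * u (j + 1))
    (huc : ∀ j ∈ Icc 1 n, u j ≤ c j + v j) (hcu : ∀ j ∈ Icc 1 n, c j ≤ u j + v j) :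
    (1 - ρ) / (1 + ρ) * ∑ j ∈ Icc 1 n, c j ^ 2 ≤ ∑ j ∈ Icc 1 n, (u j ^ 2 - v j ^ 2) ∧
      ∑ j ∈ Icc 1 n, (u j ^ 2 - v j ^ 2) ≤ (1 + ρ) / (1 - ρ) * ∑ j ∈ Icc 1 n, c j ^ 2 := by
  set U := √(∑ j ∈ Icc 1 n, u j ^ 2)
  set C := √(∑ j ∈ Icc 1 n, c j ^ 2)
  have hU0 : 0 ≤ U := Real.sqrt_nonneg _
  have hC0 : 0 ≤ C := Real.sqrt_nonneg _
  have hUsq : U ^ 2 = ∑ j ∈ Icc 1 n, u j ^ 2 := Real.sq_sqrt (sum_nonneg fun j _ => sq_nonneg _)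
  have hCsq : C ^ 2 = ∑ j ∈ Icc 1 n, c j ^ 2 := Real.sq_sqrt (sum_nonneg fun j _ => sq_nonneg _)
  have hUC : (1 - ρ) * U ≤ C := by
    have : U ^ 2 ≤ U * (C + ρ * U) := by
      rw [hUsq]
      refine le_trans (sum_le_sum fun j hj => ?_) (sum_mul_add_shift_le hρ0 u c u hn)
      nlinarith [hu j, hvu j hj, huc j hj]
    nlinarith
  have hcross : ∑ j ∈ Icc 1 n, c j * (u j + ρ * u (j + 1)) ≤ (1 + ρ) * C * U := by
    have := sum_mul_add_shift_le hρ0 c u u hn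
    linarith
  have hCU : C ≤ (1 + ρ) * U := by
    have : C ^ 2 ≤ C * ((1 + ρ) * U) := by
      rw [hCsq]
      refine le_trans (sum_le_sum fun j hj => ?_) (by linarith [hcross])
      nlinarith [hc j, hvu j hj, hcu j hj]
    nlinarith
  have hshift : ∑ j ∈ Icc 1 n, u (j + 1) ^ 2 ≤ U ^ 2 :=
    hUsq ▸ sum_Icc_shift_le (w := fun j => u j ^ 2) (sq_nonneg _) (by simp [hn])
  have hv2 : ∑ j ∈ Icc 1 n, v j ^ 2 ≤ ρ ^ 2 * U ^ 2 := by
    refine le_trans (sum_le_sum fun j hj => ?_) (mul_sum (Icc 1 n) _ (ρ ^ 2) ▸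
      mul_le_mul_of_nonneg_left hshift (sq_nonneg ρ))
    nlinarith [hv j, hvu j hj, hu (j + 1)]
  have hσ_le : ∑ j ∈ Icc 1 n, (u j ^ 2 - v j ^ 2) ≤ ∑ j ∈ Icc 1 n, c j * (u j + ρ * u (j + 1)) :=
    sum_le_sum fun j hj => by nlinarith [hu j, hv j, hc j, hvu j hj, huc j hj]
  have h1ρ : 0 < 1 - ρ := by linarith
  constructor
  · calc (1 - ρ) / (1 + ρ) * ∑ j ∈ Icc 1 n, c j ^ 2 ≤ (1 - ρ) / (1 + ρ) * ((1 + ρ) * U) ^ 2 := by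
          rw [← hCsq]; gcongr
      _ = (1 - ρ ^ 2) * U ^ 2 := by field_simp; ring
      _ ≤ _ := by rw [sum_sub_distrib, ← hUsq]; linarith
  · calc ∑ j ∈ Icc 1 n, (u j ^ 2 - v j ^ 2) ≤ (1 + ρ) * C * U := hσ_le.trans hcross
      _ ≤ (1 + ρ) * C * (C / (1 - ρ)) := by
          gcongr; rw [le_div_iff₀ h1ρ]; linarith
      _ = (1 + ρ) / (1 - ρ) * ∑ j ∈ Icc 1 n, c j ^ 2 := by rw [← hCsq]; field_simp

lemma tendsto_atTop_iff_of_le_of_le {ι : Type*} {l : Filter ι} {f g : ι → ℝ} {c C : ℝ}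
    (hc : 0 < c) (hC : 0 < C) (hcf : ∀ i, c * f i ≤ g i) (hgC : ∀ i, g i ≤ C * f i) :
    Tendsto f l atTop ↔ Tendsto g l atTop :=
  ⟨fun hf => tendsto_atTop_mono hcf (hf.const_mul_atTop hc), fun hg =>
    tendsto_atTop_mono (fun i => (inv_mul_le_iff₀ hC).2 (hgC i))
      (hg.const_mul_atTop (inv_pos.2 hC))⟩

end Numeric

namespace MeasureTheory

variable {α : Type*} {mα : MeasurableSpace α} {μ ν : Measure α}

lemma Measure.ofReal_smul_le_of_forall_mul_toReal_le [IsFiniteMeasure μ] [IsFiniteMeasure ν]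
    {a : ℝ} (ha : 0 ≤ a) (h : ∀ s, MeasurableSet s → a * (μ s).toReal ≤ (ν s).toReal) :
    ENNReal.ofReal a • μ ≤ ν := by
  refine Measure.le_iff.2 fun s hs => ?_
  rw [Measure.smul_apply, smul_eq_mul, ← ENNReal.ofReal_toReal (measure_ne_top μ s),
    ← ENNReal.ofReal_mul ha, ← ENNReal.ofReal_toReal (measure_ne_top ν s)]
  exact ENNReal.ofReal_le_ofReal (h s hs)

lemma Measure.le_ofReal_smul_of_forall_toReal_le_mul [IsFiniteMeasure μ] [IsFiniteMeasure ν]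
    {b : ℝ} (hb : 0 ≤ b) (h : ∀ s, MeasurableSet s → (ν s).toReal ≤ b * (μ s).toReal) :
    ν ≤ ENNReal.ofReal b • μ := by
  refine Measure.le_iff.2 fun s hs => ?_
  rw [Measure.smul_apply, smul_eq_mul, ← ENNReal.ofReal_toReal (measure_ne_top μ s),
    ← ENNReal.ofReal_mul hb, ← ENNReal.ofReal_toReal (measure_ne_top ν s)]
  exact ENNReal.ofReal_le_ofReal (h s hs)

lemma Integrable.of_le_ofReal_smul {f : α → ℝ} {b : ℝ} (hle : ν ≤ ENNReal.ofReal b • μ)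
    (hf : Integrable f μ) : Integrable f ν :=
  (hf.smul_measure ENNReal.ofReal_ne_top).mono_measure hle

lemma abs_integral_le_of_le_ofReal_smul {f : α → ℝ} {b : ℝ} (hb : 0 ≤ b)
    (hle : ν ≤ ENNReal.ofReal b • μ) (hf : Integrable f μ) :
    |∫ x, f x ∂ν| ≤ b * ∫ x, |f x| ∂μ := by
  calc |∫ x, f x ∂ν| ≤ ∫ x, |f x| ∂ν := abs_integral_le_integral_abs
    _ ≤ ∫ x, |f x| ∂(ENNReal.ofReal b • μ) :=
        integral_mono_measure hle (Eventually.of_forall fun x => abs_nonneg _)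
          (hf.abs.smul_measure ENNReal.ofReal_ne_top)
    _ = b * ∫ x, |f x| ∂μ := by rw [integral_smul_measure, ENNReal.toReal_ofReal hb, smul_eq_mul]

lemma toReal_eLpNorm_two {f : α → ℝ} (hf : MemLp f 2 μ) :
    (eLpNorm f 2 μ).toReal = √(∫ x, f x ^ 2 ∂μ) := by
  rw [hf.eLpNorm_eq_integral_rpow_norm two_ne_zero ENNReal.ofNat_ne_top,
    ENNReal.toReal_ofReal (by positivity), Real.sqrt_eq_rpow]
  simp

lemma sqrt_integral_sq_add_le {f g : α → ℝ} (hf : MemLp f 2 μ) (hg : MemLp g 2 μ) :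
    √(∫ x, (f x + g x) ^ 2 ∂μ) ≤ √(∫ x, f x ^ 2 ∂μ) + √(∫ x, g x ^ 2 ∂μ) := by
  have hfg := toReal_eLpNorm_two (hf.add hg)
  simp only [Pi.add_apply] at hfg
  rw [← toReal_eLpNorm_two hf, ← toReal_eLpNorm_two hg, ← hfg,
    ← ENNReal.toReal_add hf.eLpNorm_ne_top hg.eLpNorm_ne_top]
  exact ENNReal.toReal_mono (ENNReal.add_ne_top.2 ⟨hf.eLpNorm_ne_top, hg.eLpNorm_ne_top⟩)
    (eLpNorm_add_le hf.1 hg.1 one_le_two)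

lemma integral_add_sq {f g : α → ℝ} (hf : MemLp f 2 μ) (hg : MemLp g 2 μ) :
    ∫ x, (f x + g x) ^ 2 ∂μ = ∫ x, f x ^ 2 ∂μ + 2 * ∫ x, f x * g x ∂μ + ∫ x, g x ^ 2 ∂μ := by
  have hfg : Integrable (fun x => f x * g x) μ := hf.integrable_mul hg
  have hint : Integrable (fun x => f x ^ 2 + 2 * (f x * g x)) μ :=
    hf.integrable_sq.add (hfg.const_mul 2)
  simp_rw [add_sq, mul_assoc]
  rw [integral_add hint hg.integrable_sq, integral_add hf.integrable_sq (hfg.const_mul 2),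
    integral_const_mul]

lemma integral_sub_const_sq [IsProbabilityMeasure μ] {f : α → ℝ} (hf : MemLp f 2 μ) (c : ℝ) :
    ∫ x, (f x - c) ^ 2 ∂μ = ∫ x, f x ^ 2 ∂μ - 2 * c * ∫ x, f x ∂μ + c ^ 2 := by
  have hf1 := hf.integrable one_le_two
  have hexp : ∀ x, (f x - c) ^ 2 = f x ^ 2 - 2 * c * f x + c ^ 2 := fun x => by ring
  simp_rw [hexp]
  have hint : Integrable (fun x => f x ^ 2 - 2 * c * f x) μ :=
    hf.integrable_sq.sub (hf1.const_mul (2 * c))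
  rw [integral_add hint (integrable_const _),
    integral_sub hf.integrable_sq (hf1.const_mul (2 * c)), integral_const_mul]
  simp

/-- For every `c`, `a ∫ (f - c)² dμ ≤ ∫ (f - c)² dν`; the claim is that the discriminant of this
quadratic in `c` is nonpositive. -/
lemma sq_integral_le_of_ofReal_smul_le {ν : Measure α} [IsProbabilityMeasure μ]
    [IsProbabilityMeasure ν] {a : ℝ} (ha : 0 ≤ a) (hle : ENNReal.ofReal a • μ ≤ ν)
    {f : α → ℝ} (hfμ : MemLp f 2 μ) (hfν : MemLp f 2 ν) (hf0 : ∫ x, f x ∂μ = 0) :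
    (∫ x, f x ∂ν) ^ 2 ≤ (1 - a) * (∫ x, f x ^ 2 ∂ν - a * ∫ x, f x ^ 2 ∂μ) := by
  have hquad : ∀ c : ℝ, 0 ≤ (1 - a) * (c * c) + (-2 * ∫ x, f x ∂ν) * c
      + (∫ x, f x ^ 2 ∂ν - a * ∫ x, f x ^ 2 ∂μ) := by
    intro c
    have hmono : ∫ x, (f x - c) ^ 2 ∂(ENNReal.ofReal a • μ) ≤ ∫ x, (f x - c) ^ 2 ∂ν :=
      integral_mono_measure hle (Eventually.of_forall fun x => sq_nonneg _)
        ((hfν.sub (memLp_const c)).integrable_sq)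
    rw [integral_smul_measure, ENNReal.toReal_ofReal ha, integral_sub_const_sq hfμ,
      integral_sub_const_sq hfν, hf0, smul_eq_mul] at hmono
    nlinarith
  have := discrim_le_zero hquad
  rw [discrim] at this
  nlinarith

end MeasureTheory

namespace ProbabilityTheory

open MeasureTheory

variable {Ω S : Type*} {m : MeasurableSpace Ω} [MeasurableSpace S] {P : Measure Ω}
  {ξ : ℕ → Ω → S} {κ : Kernel S S} {k : ℕ}

abbrev history (ξ : ℕ → Ω → S) (k : ℕ) : MeasurableSpace Ω :=
  ⨆ i ∈ Finset.Icc 1 k, MeasurableSpace.comap (ξ i) inferInstance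

lemma history_le (hξ : ∀ i, Measurable (ξ i)) (k : ℕ) : history ξ k ≤ m :=
  iSup₂_le fun i _ => (hξ i).comap_le

lemma history_mono (ξ : ℕ → Ω → S) : Monotone (history ξ) := fun _ _ hkl =>
  biSup_mono fun _ hi => Finset.Icc_subset_Icc_right hkl hi

lemma measurable_history {i : ℕ} (hi : i ∈ Finset.Icc 1 k) : Measurable[history ξ k] (ξ i) :=
  Measurable.of_comap_le (le_iSup₂ (f := fun i (_ : i ∈ Finset.Icc 1 k) =>
    MeasurableSpace.comap (ξ i) inferInstance) i hi)

def IsMarkovStep (P : Measure Ω) (ξ : ℕ → Ω → S) (k : ℕ) (κ : Kernel S S) : Prop :=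
  ∀ h : S → ℝ, Measurable h → (∀ y, |h y| ≤ 1) →
    P[fun ω => h (ξ (k + 1) ω) | history ξ k] =ᵐ[P] fun ω => ∫ y, h y ∂(κ (ξ k ω))

lemma measurable_integral_kernel {v : S → ℝ} (hv : Measurable v) :
    Measurable fun x => ∫ y, v y ∂(κ x) :=
  (hv.stronglyMeasurable.integral_kernel (κ := κ)).measurable

lemma measurable_truncation {v : S → ℝ} (hv : Measurable v) (M : ℝ) :
    Measurable (truncation v M) :=
  (measurable_id.indicator measurableSet_Ioc).comp hv

lemma memLp_integral_kernel [IsFiniteMeasure P] (hξ : ∀ i, Measurable (ξ i)) {b : ℝ} (hb : 0 ≤ b)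
    (hup : ∀ᵐ ω ∂P, κ (ξ k ω) ≤ ENNReal.ofReal b • P.map (ξ (k + 1)))
    {v : S → ℝ} (hv : Measurable v) (hvi : Integrable (fun ω => v (ξ (k + 1) ω)) P)
    (p : ℝ≥0∞) : MemLp (fun ω => ∫ y, v y ∂(κ (ξ k ω))) p P := by
  have hvmap : Integrable v (P.map (ξ (k + 1))) :=
    (integrable_map_measure hv.aestronglyMeasurable (hξ _).aemeasurable).2 hvi
  refine MemLp.of_bound ((measurable_integral_kernel hv).comp (hξ k)).aestronglyMeasurable
    (b * ∫ y, |v y| ∂(P.map (ξ (k + 1)))) ?_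
  filter_upwards [hup] with ω hω
  exact abs_integral_le_of_le_ofReal_smul hb hω hvmap

lemma tendsto_integral_mul_integral_kernel_truncation (hξ : ∀ i, Measurable (ξ i)) {b : ℝ}
    (hb : 0 ≤ b) (hup : ∀ᵐ ω ∂P, κ (ξ k ω) ≤ ENNReal.ofReal b • P.map (ξ (k + 1)))
    {Y : Ω → ℝ} (hYi : Integrable Y P)
    {v : S → ℝ} (hv : Measurable v) (hvi : Integrable (fun ω => v (ξ (k + 1) ω)) P) :
    Tendsto (fun M : ℝ => ∫ ω, Y ω * ∫ y, truncation v M y ∂(κ (ξ k ω)) ∂P) atTop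
      (𝓝 (∫ ω, Y ω * ∫ y, v y ∂(κ (ξ k ω)) ∂P)) := by
  have hvmap : Integrable v (P.map (ξ (k + 1))) :=
    (integrable_map_measure hv.aestronglyMeasurable (hξ _).aemeasurable).2 hvi
  refine tendsto_integral_filter_of_dominated_convergence
    (fun ω => |Y ω| * (b * ∫ y, |v y| ∂(P.map (ξ (k + 1)))))
    (Eventually.of_forall fun M => hYi.aestronglyMeasurable.mul
      ((measurable_integral_kernel (measurable_truncation hv M)).comp (hξ k)).aestronglyMeasurable)
    (Eventually.of_forall fun M => ?_) (hYi.abs.mul_const _) ?_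
  · filter_upwards [hup] with ω hω
    have hvM : Integrable (truncation v M) (P.map (ξ (k + 1))) :=
      hvmap.mono (measurable_truncation hv M).aestronglyMeasurable
        (Eventually.of_forall fun y => abs_truncation_le_abs_self _ _ _)
    rw [Real.norm_eq_abs, abs_mul]
    refine mul_le_mul_of_nonneg_left ((abs_integral_le_of_le_ofReal_smul hb hω hvM).trans ?_)
      (abs_nonneg _)
    exact mul_le_mul_of_nonneg_left (integral_mono hvM.abs hvmap.abs
      fun y => abs_truncation_le_abs_self _ _ _) hb
  · filter_upwards [hup] with ω hω
    exact (tendsto_integral_truncation (hvmap.of_le_ofReal_smul hω)).const_mul _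

namespace IsMarkovStep

lemma condExp_eq_of_bounded (hM : IsMarkovStep P ξ k κ) {v : S → ℝ} (hv : Measurable v) {C : ℝ}
    (hC : ∀ y, |v y| ≤ C) :
    P[fun ω => v (ξ (k + 1) ω) | history ξ k] =ᵐ[P] fun ω => ∫ y, v y ∂(κ (ξ k ω)) := by
  set c := max C 1
  have hc : 0 < c := lt_of_lt_of_le one_pos (le_max_right _ _)
  have hscaled := hM (fun y => c⁻¹ * v y) (hv.const_mul _) fun y => by
    rw [abs_mul, abs_inv, abs_of_pos hc, inv_mul_le_one₀ hc]
    exact (hC y).trans (le_max_left _ _)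
  filter_upwards [hscaled, condExp_smul (μ := P) c⁻¹ (fun ω => v (ξ (k + 1) ω)) (history ξ k)]
    with ω h1 h2
  rw [integral_const_mul] at h1
  have h3 : c⁻¹ * P[fun ω => v (ξ (k + 1) ω) | history ξ k] ω =
      c⁻¹ * ∫ y, v y ∂(κ (ξ k ω)) := by
    rw [← h1]; exact h2.symm
  exact mul_left_cancel₀ (inv_ne_zero hc.ne') h3

lemma integral_mul_eq_of_bounded [IsFiniteMeasure P] (hM : IsMarkovStep P ξ k κ)
    (hξ : ∀ i, Measurable (ξ i))
    {Y : Ω → ℝ} (hY : StronglyMeasurable[history ξ k] Y) (hYi : Integrable Y P)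
    {v : S → ℝ} (hv : Measurable v) {C : ℝ} (hC : ∀ y, |v y| ≤ C) :
    ∫ ω, Y ω * v (ξ (k + 1) ω) ∂P = ∫ ω, Y ω * ∫ y, v y ∂(κ (ξ k ω)) ∂P := by
  have hvξ : Integrable (fun ω => v (ξ (k + 1) ω)) P :=
    Integrable.of_bound ((hv.comp (hξ _)).aestronglyMeasurable) C
      (Eventually.of_forall fun ω => hC _)
  have hYv : Integrable (Y * fun ω => v (ξ (k + 1) ω)) P :=
    hYi.mul_bdd (hv.comp (hξ _)).aestronglyMeasurable (Eventually.of_forall fun ω => hC _)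
  calc ∫ ω, Y ω * v (ξ (k + 1) ω) ∂P
      = ∫ ω, P[Y * fun ω => v (ξ (k + 1) ω) | history ξ k] ω ∂P :=
        (integral_condExp (history_le hξ k)).symm
    _ = ∫ ω, Y ω * ∫ y, v y ∂(κ (ξ k ω)) ∂P := by
        refine integral_congr_ae ?_
        filter_upwards [condExp_mul_of_stronglyMeasurable_left hY hYv hvξ,
          hM.condExp_eq_of_bounded hv hC] with ω h1 h2
        rw [h1, Pi.mul_apply, h2]

lemma integral_mul_eq [IsFiniteMeasure P] (hM : IsMarkovStep P ξ k κ)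
    (hξ : ∀ i, Measurable (ξ i)) {b : ℝ} (hb : 0 ≤ b)
    (hup : ∀ᵐ ω ∂P, κ (ξ k ω) ≤ ENNReal.ofReal b • P.map (ξ (k + 1)))
    {Y : Ω → ℝ} (hY : StronglyMeasurable[history ξ k] Y) (hYi : Integrable Y P)
    {v : S → ℝ} (hv : Measurable v) (hvi : Integrable (fun ω => v (ξ (k + 1) ω)) P)
    (hYv : Integrable (fun ω => Y ω * v (ξ (k + 1) ω)) P) :
    ∫ ω, Y ω * v (ξ (k + 1) ω) ∂P = ∫ ω, Y ω * ∫ y, v y ∂(κ (ξ k ω)) ∂P := by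
  have hL : Tendsto (fun M : ℝ => ∫ ω, Y ω * truncation v M (ξ (k + 1) ω) ∂P) atTop
      (𝓝 (∫ ω, Y ω * v (ξ (k + 1) ω) ∂P)) := by
    refine tendsto_integral_filter_of_dominated_convergence (fun ω => |Y ω * v (ξ (k + 1) ω)|)
      (Eventually.of_forall fun M => hYi.aestronglyMeasurable.mul
        ((measurable_truncation hv M).comp (hξ _)).aestronglyMeasurable)
      (Eventually.of_forall fun M => Eventually.of_forall fun ω => ?_) hYv.abs
      (Eventually.of_forall fun ω => ?_)
    · rw [Real.norm_eq_abs, abs_mul, abs_mul]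
      exact mul_le_mul_of_nonneg_left (abs_truncation_le_abs_self _ _ _) (abs_nonneg _)
    · exact tendsto_const_nhds.congr' <| (eventually_gt_atTop |v (ξ (k + 1) ω)|).mono
        fun M hM => by dsimp only; rw [truncation_eq_self hM]
  refine tendsto_nhds_unique hL
    ((tendsto_integral_mul_integral_kernel_truncation hξ hb hup hYi hv hvi).congr fun M => ?_)
  exact (hM.integral_mul_eq_of_bounded hξ hY hYi (measurable_truncation hv M)
    (abs_truncation_le_bound v M)).symm

lemma integral_kernel_eq [IsFiniteMeasure P] (hM : IsMarkovStep P ξ k κ)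
    (hξ : ∀ i, Measurable (ξ i)) {b : ℝ} (hb : 0 ≤ b)
    (hup : ∀ᵐ ω ∂P, κ (ξ k ω) ≤ ENNReal.ofReal b • P.map (ξ (k + 1)))
    {v : S → ℝ} (hv : Measurable v) (hvi : Integrable (fun ω => v (ξ (k + 1) ω)) P) :
    ∫ ω, ∫ y, v y ∂(κ (ξ k ω)) ∂P = ∫ ω, v (ξ (k + 1) ω) ∂P := by
  simpa using (hM.integral_mul_eq hξ hb hup stronglyMeasurable_const (integrable_const 1) hv hvi
    (by simpa using hvi)).symm

lemma integral_sq_kernel_le [IsProbabilityMeasure P] [IsMarkovKernel κ]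
    (hM : IsMarkovStep P ξ k κ) (hξ : ∀ i, Measurable (ξ i)) {a b : ℝ} (ha : 0 ≤ a) (hb : 0 ≤ b)
    (hdom : ∀ᵐ ω ∂P, ENNReal.ofReal a • P.map (ξ (k + 1)) ≤ κ (ξ k ω) ∧
      κ (ξ k ω) ≤ ENNReal.ofReal b • P.map (ξ (k + 1)))
    {v : S → ℝ} (hv : Measurable v) (hv2 : MemLp (fun ω => v (ξ (k + 1) ω)) 2 P)
    (hv0 : ∫ ω, v (ξ (k + 1) ω) ∂P = 0) :
    ∫ ω, (∫ y, v y ∂(κ (ξ k ω))) ^ 2 ∂P ≤ (1 - a) ^ 2 * ∫ ω, v (ξ (k + 1) ω) ^ 2 ∂P := by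
  set μ := P.map (ξ (k + 1))
  have : IsProbabilityMeasure μ := Measure.isProbabilityMeasure_map (hξ _).aemeasurable
  have hup : ∀ᵐ ω ∂P, κ (ξ k ω) ≤ ENNReal.ofReal b • μ := hdom.mono fun _ h => h.2
  have hvμ : MemLp v 2 μ :=
    (memLp_map_measure_iff hv.aestronglyMeasurable (hξ _).aemeasurable).2 hv2
  have hmap : ∀ w : S → ℝ, Measurable w → ∫ y, w y ∂μ = ∫ ω, w (ξ (k + 1) ω) ∂P :=
    fun w hw => integral_map (hξ _).aemeasurable hw.aestronglyMeasurable
  set I2 := ∫ ω, v (ξ (k + 1) ω) ^ 2 ∂P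
  have hpt : ∀ᵐ ω ∂P, (∫ y, v y ∂(κ (ξ k ω))) ^ 2 ≤
      (1 - a) * (∫ y, v y ^ 2 ∂(κ (ξ k ω)) - a * I2) := by
    filter_upwards [hdom] with ω ⟨hlow, hupω⟩
    have hvκ : MemLp v 2 (κ (ξ k ω)) := (memLp_two_iff_integrable_sq hv.aestronglyMeasurable).2
      (hvμ.integrable_sq.of_le_ofReal_smul hupω)
    have := sq_integral_le_of_ofReal_smul_le ha hlow hvμ hvκ (by rw [hmap v hv, hv0])
    rwa [hmap _ (hv.pow_const 2)] at this
  have hv2i : Integrable (fun ω => v (ξ (k + 1) ω) ^ 2) P := hv2.integrable_sq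
  have hQv2 : Integrable (fun ω => ∫ y, v y ^ 2 ∂(κ (ξ k ω))) P :=
    (memLp_integral_kernel hξ hb hup (hv.pow_const 2) hv2i 1).integrable le_rfl
  calc ∫ ω, (∫ y, v y ∂(κ (ξ k ω))) ^ 2 ∂P
      ≤ ∫ ω, (1 - a) * (∫ y, v y ^ 2 ∂(κ (ξ k ω)) - a * I2) ∂P :=
        integral_mono_ae
          (memLp_integral_kernel hξ hb hup hv (hv2.integrable one_le_two) 2).integrable_sq
          ((hQv2.sub (integrable_const _)).const_mul _) hpt
    _ = (1 - a) ^ 2 * I2 := by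
        rw [integral_const_mul, integral_sub hQv2 (integrable_const _),
          hM.integral_kernel_eq hξ hb hup (hv.pow_const 2) hv2i]
        simp; ring

end IsMarkovStep

section TailRegression

variable {Q : ℕ → Kernel S S} {g : ℕ → S → ℝ} {n : ℕ}

/-- `tailRegression Q g n i (ξ i) = E[g i (ξ i) + ⋯ + g n (ξ n) | ξ 1, …, ξ i]`. -/
noncomputable def tailRegression (Q : ℕ → Kernel S S) (g : ℕ → S → ℝ) (n i : ℕ) : S → ℝ :=
  if i ≤ n then fun x => g i x + ∫ y, tailRegression Q g n (i + 1) y ∂(Q (i + 1) x) else 0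
termination_by n + 1 - i

lemma tailRegression_of_le {i : ℕ} (h : i ≤ n) :
    tailRegression Q g n i =
      fun x => g i x + ∫ y, tailRegression Q g n (i + 1) y ∂(Q (i + 1) x) := by
  rw [tailRegression, if_pos h]

lemma tailRegression_of_lt {i : ℕ} (h : n < i) : tailRegression Q g n i = 0 := by
  rw [tailRegression, if_neg (by omega)]

lemma measurable_tailRegression (hg : ∀ k, Measurable (g k)) (i : ℕ) :
    Measurable (tailRegression Q g n i) := by
  by_cases h : i ≤ n
  · rw [tailRegression_of_le h]
    exact (hg i).add (measurable_integral_kernel (measurable_tailRegression hg (i + 1)))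
  · rw [tailRegression_of_lt (not_le.1 h)]
    exact measurable_const
termination_by n + 1 - i

variable [IsFiniteMeasure P]

lemma memLp_tailRegression (hξ : ∀ i, Measurable (ξ i)) {b : ℝ} (hb : 0 ≤ b)
    (hup : ∀ k, 1 ≤ k → ∀ᵐ ω ∂P, Q (k + 1) (ξ k ω) ≤ ENNReal.ofReal b • P.map (ξ (k + 1)))
    (hg : ∀ k, Measurable (g k)) (hL2 : ∀ k, MemLp (fun ω => g k (ξ k ω)) 2 P)
    {i : ℕ} (hi : 1 ≤ i) : MemLp (fun ω => tailRegression Q g n i (ξ i ω)) 2 P := by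
  by_cases h : i ≤ n
  · rw [tailRegression_of_le h]
    exact (hL2 i).add (memLp_integral_kernel hξ hb (hup i hi) (measurable_tailRegression hg _)
      ((memLp_tailRegression hξ hb hup hg hL2 ((by omega : 1 ≤ i + 1))).integrable one_le_two) 2)
  · rw [tailRegression_of_lt (not_le.1 h)]
    exact memLp_const 0
termination_by n + 1 - i

lemma integral_tailRegression (hξ : ∀ i, Measurable (ξ i))
    (hM : ∀ k, 1 ≤ k → IsMarkovStep P ξ k (Q (k + 1))) {b : ℝ} (hb : 0 ≤ b)
    (hup : ∀ k, 1 ≤ k → ∀ᵐ ω ∂P, Q (k + 1) (ξ k ω) ≤ ENNReal.ofReal b • P.map (ξ (k + 1)))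
    (hg : ∀ k, Measurable (g k)) (hL2 : ∀ k, MemLp (fun ω => g k (ξ k ω)) 2 P)
    (hcent : ∀ k, ∫ ω, g k (ξ k ω) ∂P = 0) {i : ℕ} (hi : 1 ≤ i) :
    ∫ ω, tailRegression Q g n i (ξ i ω) ∂P = 0 := by
  by_cases h : i ≤ n
  · have hnext := memLp_tailRegression hξ hb hup hg hL2 (n := n) ((by omega : 1 ≤ i + 1))
    rw [tailRegression_of_le h, integral_add ((hL2 i).integrable one_le_two)
      ((memLp_integral_kernel hξ hb (hup i hi) (measurable_tailRegression hg _)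
        (hnext.integrable one_le_two) 1).integrable le_rfl),
      (hM i hi).integral_kernel_eq hξ hb (hup i hi) (measurable_tailRegression hg _)
        (hnext.integrable one_le_two),
      hcent, integral_tailRegression hξ hM hb hup hg hL2 hcent ((by omega : 1 ≤ i + 1)), add_zero]
  · simp [tailRegression_of_lt (not_le.1 h)]
termination_by n + 1 - i

lemma integral_mul_sum_eq_integral_mul_tailRegression (hξ : ∀ i, Measurable (ξ i))
    (hM : ∀ k, 1 ≤ k → IsMarkovStep P ξ k (Q (k + 1))) {b : ℝ} (hb : 0 ≤ b)
    (hup : ∀ k, 1 ≤ k → ∀ᵐ ω ∂P, Q (k + 1) (ξ k ω) ≤ ENNReal.ofReal b • P.map (ξ (k + 1)))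
    (hg : ∀ k, Measurable (g k)) (hL2 : ∀ k, MemLp (fun ω => g k (ξ k ω)) 2 P)
    {i : ℕ} (hi : 1 ≤ i) {Y : Ω → ℝ} (hY : StronglyMeasurable[history ξ i] Y) (hY2 : MemLp Y 2 P) :
    ∫ ω, Y ω * ∑ j ∈ Icc i n, g j (ξ j ω) ∂P = ∫ ω, Y ω * tailRegression Q g n i (ξ i ω) ∂P := by
  by_cases h : i ≤ n
  · have hnext := memLp_tailRegression hξ hb hup hg hL2 (n := n) ((by omega : 1 ≤ i + 1))
    have hZ := memLp_integral_kernel hξ hb (hup i hi) (measurable_tailRegression hg _)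
      (hnext.integrable one_le_two) 2
    have hYX : Integrable (fun ω => Y ω * g i (ξ i ω)) P := hY2.integrable_mul (hL2 i)
    have hYS : Integrable (fun ω => Y ω * ∑ j ∈ Icc (i + 1) n, g j (ξ j ω)) P :=
      hY2.integrable_mul (memLp_finsetSum _ fun j _ => hL2 j)
    have hYZ : Integrable
        (fun ω => Y ω * ∫ y, tailRegression Q g n (i + 1) y ∂(Q (i + 1) (ξ i ω))) P :=
      hY2.integrable_mul hZ
    simp_rw [sum_Icc_eq_add_sum_Icc_succ _ h, tailRegression_of_le h, mul_add]
    rw [integral_add hYX hYS, integral_add hYX hYZ,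
      integral_mul_sum_eq_integral_mul_tailRegression hξ hM hb hup hg hL2 ((by omega : 1 ≤ i + 1))
        (hY.mono (history_mono ξ i.le_succ)) hY2,
      (hM i hi).integral_mul_eq hξ hb (hup i hi) hY (hY2.integrable one_le_two)
        (measurable_tailRegression hg _) (hnext.integrable one_le_two)
        (hY2.integrable_mul hnext)]
  · simp [tailRegression_of_lt (not_le.1 h), Icc_eq_empty_of_lt (not_le.1 h)]
termination_by n + 1 - i

lemma integral_sq_sum_eq (hξ : ∀ i, Measurable (ξ i))
    (hM : ∀ k, 1 ≤ k → IsMarkovStep P ξ k (Q (k + 1))) {b : ℝ} (hb : 0 ≤ b)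
    (hup : ∀ k, 1 ≤ k → ∀ᵐ ω ∂P, Q (k + 1) (ξ k ω) ≤ ENNReal.ofReal b • P.map (ξ (k + 1)))
    (hg : ∀ k, Measurable (g k)) (hL2 : ∀ k, MemLp (fun ω => g k (ξ k ω)) 2 P)
    {i : ℕ} (hi : 1 ≤ i) :
    ∫ ω, (∑ j ∈ Icc i n, g j (ξ j ω)) ^ 2 ∂P =
      ∑ j ∈ Icc i n, (∫ ω, tailRegression Q g n j (ξ j ω) ^ 2 ∂P -
        ∫ ω, (∫ y, tailRegression Q g n (j + 1) y ∂(Q (j + 1) (ξ j ω))) ^ 2 ∂P) := by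
  by_cases h : i ≤ n
  · have hnext := memLp_tailRegression hξ hb hup hg hL2 (n := n) (by omega : 1 ≤ i + 1)
    have hZ := memLp_integral_kernel hξ hb (hup i hi) (measurable_tailRegression hg _)
      (hnext.integrable one_le_two) 2
    have hcross : ∫ ω, g i (ξ i ω) * ∑ j ∈ Icc (i + 1) n, g j (ξ j ω) ∂P =
        ∫ ω, g i (ξ i ω) * ∫ y, tailRegression Q g n (i + 1) y ∂(Q (i + 1) (ξ i ω)) ∂P := by
      have hX : StronglyMeasurable[history ξ i] fun ω => g i (ξ i ω) :=
        ((hg i).comp (measurable_history (by simp; omega))).stronglyMeasurable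
      rw [integral_mul_sum_eq_integral_mul_tailRegression hξ hM hb hup hg hL2 (by omega)
          (hX.mono (history_mono ξ i.le_succ)) (hL2 i),
        (hM i hi).integral_mul_eq hξ hb (hup i hi) hX ((hL2 i).integrable one_le_two)
          (measurable_tailRegression hg _) (hnext.integrable one_le_two)
          ((hL2 i).integrable_mul hnext)]
    have hf : ∫ ω, tailRegression Q g n i (ξ i ω) ^ 2 ∂P =
        ∫ ω, g i (ξ i ω) ^ 2 ∂P
          + 2 * ∫ ω, g i (ξ i ω) * ∫ y, tailRegression Q g n (i + 1) y ∂(Q (i + 1) (ξ i ω)) ∂P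
          + ∫ ω, (∫ y, tailRegression Q g n (i + 1) y ∂(Q (i + 1) (ξ i ω))) ^ 2 ∂P := by
      rw [tailRegression_of_le h]
      exact integral_add_sq (hL2 i) hZ
    simp_rw [sum_Icc_eq_add_sum_Icc_succ _ h]
    rw [integral_add_sq (hL2 i) (memLp_finsetSum _ fun j _ => hL2 j), hcross, hf,
      integral_sq_sum_eq hξ hM hb hup hg hL2 (by omega : 1 ≤ i + 1)]
    ring
  · simp [Icc_eq_empty_of_lt (not_le.1 h)]
termination_by n + 1 - i

lemma sqrt_integral_sq_tailRegression_le (hξ : ∀ i, Measurable (ξ i)) {b : ℝ} (hb : 0 ≤ b)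
    (hup : ∀ k, 1 ≤ k → ∀ᵐ ω ∂P, Q (k + 1) (ξ k ω) ≤ ENNReal.ofReal b • P.map (ξ (k + 1)))
    (hg : ∀ k, Measurable (g k)) (hL2 : ∀ k, MemLp (fun ω => g k (ξ k ω)) 2 P)
    {j : ℕ} (hj : j ∈ Icc 1 n) :
    √(∫ ω, tailRegression Q g n j (ξ j ω) ^ 2 ∂P) ≤ √(∫ ω, g j (ξ j ω) ^ 2 ∂P) +
        √(∫ ω, (∫ y, tailRegression Q g n (j + 1) y ∂(Q (j + 1) (ξ j ω))) ^ 2 ∂P) ∧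
      √(∫ ω, g j (ξ j ω) ^ 2 ∂P) ≤ √(∫ ω, tailRegression Q g n j (ξ j ω) ^ 2 ∂P) +
        √(∫ ω, (∫ y, tailRegression Q g n (j + 1) y ∂(Q (j + 1) (ξ j ω))) ^ 2 ∂P) := by
  obtain ⟨hj1, hjn⟩ := mem_Icc.1 hj
  have hZ := memLp_integral_kernel hξ hb (hup j hj1) (measurable_tailRegression hg _)
    ((memLp_tailRegression hξ hb hup hg hL2 (n := n) (by omega : 1 ≤ j + 1)).integrable
      one_le_two) 2
  have hf := memLp_tailRegression hξ hb hup hg hL2 (n := n) hj1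
  constructor
  · rw [tailRegression_of_le hjn]
    exact sqrt_integral_sq_add_le (hL2 j) hZ
  · have := sqrt_integral_sq_add_le hf hZ.neg
    rw [tailRegression_of_le hjn] at this ⊢
    simpa using this

end TailRegression

lemma ae_ofReal_smul_le_kernel_and_le (hξk : Measurable (ξ k)) [IsProbabilityMeasure P]
    {μ : Measure S} [IsFiniteMeasure μ] [IsFiniteKernel κ] {a b : ℝ} (ha : 0 ≤ a) (hb : 0 ≤ b)
    (h : ∃ S' : Set S, MeasurableSet S' ∧ P.map (ξ k) S' = 1 ∧ ∀ x ∈ S', ∀ A : Set S,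
      MeasurableSet A → a * (μ A).toReal ≤ (κ x A).toReal ∧ (κ x A).toReal ≤ b * (μ A).toReal) :
    ∀ᵐ ω ∂P, ENNReal.ofReal a • μ ≤ κ (ξ k ω) ∧ κ (ξ k ω) ≤ ENNReal.ofReal b • μ := by
  obtain ⟨S', hS', hS'1, hdom⟩ := h
  have : IsProbabilityMeasure (P.map (ξ k)) := Measure.isProbabilityMeasure_map hξk.aemeasurable
  have hae : ∀ᵐ x ∂(P.map (ξ k)), x ∈ S' :=
    (ae_mem_iff_measure_eq hS'.nullMeasurableSet).2 (by rw [hS'1, measure_univ])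
  filter_upwards [ae_of_ae_map hξk.aemeasurable hae] with ω hω
  exact ⟨Measure.ofReal_smul_le_of_forall_mul_toReal_le ha fun A hA => (hdom _ hω A hA).1,
    Measure.le_ofReal_smul_of_forall_toReal_le_mul hb fun A hA => (hdom _ hω A hA).2⟩

section Assembly

variable [IsProbabilityMeasure P] {Q : ℕ → Kernel S S} [∀ k, IsMarkovKernel (Q k)] {g : ℕ → S → ℝ}

theorem variance_sum_bounds (hξ : ∀ i, Measurable (ξ i))
    (hM : ∀ k, 1 ≤ k → IsMarkovStep P ξ k (Q (k + 1))) {a b : ℝ} (ha : 0 < a) (ha1 : a ≤ 1)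
    (hb : 0 ≤ b) (hdom : ∀ k, 1 ≤ k → ∀ᵐ ω ∂P,
      ENNReal.ofReal a • P.map (ξ (k + 1)) ≤ Q (k + 1) (ξ k ω) ∧
        Q (k + 1) (ξ k ω) ≤ ENNReal.ofReal b • P.map (ξ (k + 1)))
    (hg : ∀ k, Measurable (g k)) (hL2 : ∀ k, MemLp (fun ω => g k (ξ k ω)) 2 P)
    (hcent : ∀ k, ∫ ω, g k (ξ k ω) ∂P = 0) (n : ℕ) :
    a / (2 - a) * ∑ j ∈ Icc 1 n, ∫ ω, g j (ξ j ω) ^ 2 ∂P ≤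
        ∫ ω, (∑ j ∈ Icc 1 n, g j (ξ j ω)) ^ 2 ∂P ∧
      ∫ ω, (∑ j ∈ Icc 1 n, g j (ξ j ω)) ^ 2 ∂P ≤
        (2 - a) / a * ∑ j ∈ Icc 1 n, ∫ ω, g j (ξ j ω) ^ 2 ∂P := by
  have hup k hk := (hdom k hk).mono fun _ h => h.2
  set F := fun j => ∫ ω, tailRegression Q g n j (ξ j ω) ^ 2 ∂P
  set Z := fun j => ∫ ω, (∫ y, tailRegression Q g n (j + 1) y ∂(Q (j + 1) (ξ j ω))) ^ 2 ∂P
  set E := fun j => ∫ ω, g j (ξ j ω) ^ 2 ∂P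
  have hF0 : ∀ j, 0 ≤ F j := fun j => integral_nonneg fun _ => sq_nonneg _
  have hZ0 : ∀ j, 0 ≤ Z j := fun j => integral_nonneg fun _ => sq_nonneg _
  have hE0 : ∀ j, 0 ≤ E j := fun j => integral_nonneg fun _ => sq_nonneg _
  have hcontract : ∀ j ∈ Icc 1 n, √(Z j) ≤ (1 - a) * √(F (j + 1)) := by
    intro j hj
    have hj1 := (mem_Icc.1 hj).1
    have := (hM j hj1).integral_sq_kernel_le hξ ha.le hb (hdom j hj1)
      (measurable_tailRegression (n := n) hg _) (memLp_tailRegression hξ hb hup hg hL2 (by omega))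
      (integral_tailRegression hξ hM hb hup hg hL2 hcent (by omega))
    rw [← Real.sqrt_sq (by linarith : 0 ≤ 1 - a), ← Real.sqrt_mul (sq_nonneg _)]
    exact Real.sqrt_le_sqrt this
  have hlast : √(F (n + 1)) = 0 := by simp [F, tailRegression_of_lt (Nat.lt_succ_self n)]
  obtain ⟨hlow, hupp⟩ := sum_sq_sub_sq_bounds (by linarith : 0 ≤ 1 - a) (by linarith)
    (fun j => Real.sqrt_nonneg (F j)) (fun j => Real.sqrt_nonneg (Z j))
    (fun j => Real.sqrt_nonneg (E j)) hlast hcontract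
    (fun j hj => (sqrt_integral_sq_tailRegression_le hξ hb hup hg hL2 hj).1)
    (fun j hj => (sqrt_integral_sq_tailRegression_le hξ hb hup hg hL2 hj).2)
  simp only [Real.sq_sqrt (hF0 _), Real.sq_sqrt (hZ0 _), Real.sq_sqrt (hE0 _)] at hlow hupp
  rw [integral_sq_sum_eq hξ hM hb hup hg hL2 le_rfl]
  constructor
  · convert hlow using 2; ring
  · convert hupp using 2; ring

end Assembly

end ProbabilityTheory

/-- Under the two-sided kernel domination condition with lower constant `a > 0`,
`(a/(2-a)) τ_n² ≤ σ_n² ≤ ((2-a)/a) τ_n²`; in particular `τ_n² → ∞ ↔ σ_n² → ∞`. -/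
theorem variance_comparison_kernel_domination
    {Ω S : Type*} {m : MeasurableSpace Ω} [MeasurableSpace S]
    (P : Measure Ω) [IsProbabilityMeasure P]
    (ξ : ℕ → Ω → S) (hξ : ∀ k, Measurable (ξ k))
    (Q : ℕ → ProbabilityTheory.Kernel S S) [∀ k, ProbabilityTheory.IsMarkovKernel (Q k)]
    -- Markov property
    (hMarkov : ∀ k, 2 ≤ k → ∀ h : S → ℝ, Measurable h → (∀ y, |h y| ≤ 1) →
      P[(fun ω => h (ξ k ω)) |
          ⨆ i ∈ Finset.Icc 1 (k - 1), MeasurableSpace.comap (ξ i) inferInstance]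
        =ᵐ[P] fun ω => ∫ y, h y ∂(Q k (ξ (k - 1) ω)))
    (a b : ℝ) (ha : 0 < a) (ha1 : a ≤ 1) (hb1 : 1 ≤ b)
    -- two-sided kernel domination by the marginals `P_k = P ∘ ξ_k⁻¹`
    (hdom : ∀ k, 2 ≤ k → ∃ S' : Set S, MeasurableSet S' ∧
      Measure.map (ξ (k - 1)) P S' = 1 ∧
      ∀ x ∈ S', ∀ A : Set S, MeasurableSet A →
        a * (Measure.map (ξ k) P A).toReal ≤ (Q k x A).toReal ∧
        (Q k x A).toReal ≤ b * (Measure.map (ξ k) P A).toReal)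
    (g : ℕ → S → ℝ) (hgmeas : ∀ k, Measurable (g k))
    (hL2 : ∀ k, MemLp (fun ω => g k (ξ k ω)) 2 P)
    (hcent : ∀ k, ∫ ω, g k (ξ k ω) ∂P = 0) :
    (∀ n : ℕ,
      a / (2 - a) * ∑ j ∈ Finset.Icc 1 n, ∫ ω, g j (ξ j ω) ^ 2 ∂P ≤
          (∫ ω, (∑ j ∈ Finset.Icc 1 n, g j (ξ j ω)) ^ 2 ∂P) ∧
        (∫ ω, (∑ j ∈ Finset.Icc 1 n, g j (ξ j ω)) ^ 2 ∂P) ≤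
          (2 - a) / a * ∑ j ∈ Finset.Icc 1 n, ∫ ω, g j (ξ j ω) ^ 2 ∂P) ∧
    (Tendsto (fun n => ∑ j ∈ Finset.Icc 1 n, ∫ ω, g j (ξ j ω) ^ 2 ∂P) atTop atTop ↔
      Tendsto (fun n => ∫ ω, (∑ j ∈ Finset.Icc 1 n, g j (ξ j ω)) ^ 2 ∂P) atTop atTop) := by
  have hb : 0 ≤ b := by linarith
  have hM : ∀ k, 1 ≤ k → IsMarkovStep P ξ k (Q (k + 1)) := fun k hk =>
    hMarkov (k + 1) (by omega)
  have hsandwich : ∀ k, 1 ≤ k → ∀ᵐ ω ∂P, ENNReal.ofReal a • P.map (ξ (k + 1)) ≤ Q (k + 1) (ξ k ω) ∧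
      Q (k + 1) (ξ k ω) ≤ ENNReal.ofReal b • P.map (ξ (k + 1)) := fun k hk =>
    ae_ofReal_smul_le_kernel_and_le (hξ k) ha.le hb (hdom (k + 1) (by omega))
  have bounds := variance_sum_bounds hξ hM ha ha1 hb hsandwich hgmeas hL2 hcent
  exact ⟨bounds, tendsto_atTop_iff_of_le_of_le (div_pos ha (by linarith)) (div_pos (by linarith) ha)
    (fun n => (bounds n).1) (fun n => (bounds n).2)⟩
end
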